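/- arXiv:1712.00594 — 6 statements merged into one kernel-verified Lean document; each statement's English description precedes it below -/
import Mathlib

section
/- Let μ be a finite Borel measure on ℂ with compact support and let I ⊂ [0,π] be an open set. Then ∬_{x−y ∈ K_I∖{0}} |x−y|^{−1} dμ(x) dμ(y) ≤ ∫_{I⊥} ‖P_θμ‖₂² dθ. -/
/-!
For `z = x - y ∈ K_I \ {0}` the projection coordinate `θ ↦ P_θ z` is `|z|`-Lipschitz and vanishes
at the direction `θ₀ ∈ I⊥` perpendicular to `z`, so the directions `θ ∈ I⊥` with `|P_θ z| ≤ δ`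
contain an interval of length `2δ / |z|` around `θ₀`. Hence
`|z|⁻¹ ≤ liminf_{δ → 0⁺} (2δ)⁻¹ |{θ ∈ I⊥ : |P_θ z| ≤ δ}|`, and by Fatou and Fubini it suffices to
show `(μ × μ){|P_θ x - P_θ y| ≤ δ} ≤ 2δ ‖P_θ μ‖₂²` for each `θ`. Writing `f` for the density of
`P_θ μ`, the left side is `∬_{|s - t| ≤ δ} f(s) f(t) ds dt`, which Schur's test bounds by `2δ ∫ f²`.
-/

open MeasureTheory Measure Set Filter Metric
open scoped ENNReal Real Topology Classical

/-- Coordinate of the orthogonal projection of `z ∈ ℂ` onto the line `L_θ = {r e^{iθ}}`. -/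
noncomputable def projCoord (θ : ℝ) (z : ℂ) : ℝ :=
  (z * Complex.exp (-(θ : ℂ) * Complex.I)).re

/-- Orthogonal projection of `z ∈ ℂ` onto the line `L_θ`, as a point of `ℂ`. -/
noncomputable def projPt (θ : ℝ) (z : ℂ) : ℂ :=
  (projCoord θ z : ℂ) * Complex.exp ((θ : ℂ) * Complex.I)

/-- `‖P_θ μ‖₂²`: the squared `L²` norm of the density of the projection of `μ` onto `L_θ`
(w.r.t. length), equal to `∞` if the projection is not absolutely continuous with
square-integrable density. -/
noncomputable def projL2sq (θ : ℝ) (μ : Measure ℂ) : ℝ≥0∞ :=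
  if _h : (μ.map (projCoord θ)) ≪ (volume : Measure ℝ) then
    ∫⁻ r, ((μ.map (projCoord θ)).rnDeriv volume r) ^ 2
  else ⊤

/-- The cone `K_J = {r e^{iθ} : r ∈ ℝ, θ ∈ J} ⊆ ℂ`. -/
def coneOf (J : Set ℝ) : Set ℂ :=
  {z | ∃ r θ : ℝ, θ ∈ J ∧ z = (r : ℂ) * Complex.exp ((θ : ℂ) * Complex.I)}

open scoped NNReal

lemma projCoord_sub (θ : ℝ) (x y : ℂ) :
    projCoord θ (x - y) = projCoord θ x - projCoord θ y := by
  simp [projCoord, sub_mul]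

lemma continuous_projCoord : Continuous fun p : ℝ × ℂ => projCoord p.1 p.2 := by
  unfold projCoord; fun_prop

lemma lipschitzWith_projCoord (z : ℂ) : LipschitzWith ‖z‖₊ fun θ => projCoord θ z := by
  refine LipschitzWith.of_dist_le_mul fun θ θ' => ?_
  have hexp : ∀ t : ℝ, Complex.exp (-(t : ℂ) * Complex.I) = circleMap 0 1 (-t) := fun t => by
    simp [circleMap]
  calc dist (projCoord θ z) (projCoord θ' z)
      = |(z * (circleMap 0 1 (-θ) - circleMap 0 1 (-θ'))).re| := by
        simp only [projCoord, hexp, Real.dist_eq, mul_sub, Complex.sub_re]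
    _ ≤ ‖z‖ * dist (circleMap 0 1 (-θ)) (circleMap 0 1 (-θ')) := by
        rw [dist_eq_norm, ← norm_mul]; exact Complex.abs_re_le_norm _
    _ ≤ ‖z‖ * dist θ θ' := by
        gcongr
        simpa [dist_neg_neg] using (lipschitzWith_circleMap 0 1).dist_le_mul (-θ) (-θ')

lemma projCoord_add_pi_div_two (r α : ℝ) :
    projCoord (α + π / 2) ((r : ℂ) * Complex.exp ((α : ℂ) * Complex.I)) = 0 := by
  have : (α : ℂ) * Complex.I + -((α + π / 2 : ℝ) : ℂ) * Complex.I
      = ((-(π / 2) : ℝ) : ℂ) * Complex.I := by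
    push_cast; ring
  rw [projCoord, mul_assoc, ← Complex.exp_add, this, Complex.re_ofReal_mul,
    Complex.exp_ofReal_mul_I_re, Real.cos_neg, Real.cos_pi_div_two, mul_zero]

lemma ofReal_le_restrict_setOf_abs_le_of_lipschitzWith {T : Set ℝ} (hT : IsOpen T) {g : ℝ → ℝ}
    {L : ℝ≥0} (hL : 0 < L) (hg : LipschitzWith L g) {θ₀ : ℝ} (hθ₀ : θ₀ ∈ T) (hg₀ : g θ₀ = 0) :
    ∀ᶠ δ in 𝓝 0, ENNReal.ofReal (2 * δ / L) ≤ volume.restrict T {θ | |g θ| ≤ δ} := by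
  obtain ⟨ε, hε, hball⟩ := Metric.isOpen_iff.1 hT θ₀ hθ₀
  have hsmall : ∀ᶠ δ in 𝓝 (0 : ℝ), δ / L < ε := by
    refine (tendsto_id.div_const (L : ℝ)).eventually_lt_const ?_
    simpa using hε
  filter_upwards [hsmall] with δ hδ
  have hsub : closedBall θ₀ (δ / L) ⊆ {θ | |g θ| ≤ δ} := fun θ hθ =>
    calc |g θ| = dist (g θ) (g θ₀) := by rw [hg₀, Real.dist_eq, sub_zero]
      _ ≤ L * dist θ θ₀ := hg.dist_le_mul θ θ₀
      _ ≤ L * (δ / L) := by gcongr; exact hθ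
      _ = δ := mul_div_cancel₀ _ (NNReal.coe_ne_zero.2 hL.ne')
  calc ENNReal.ofReal (2 * δ / L) = volume (closedBall θ₀ (δ / L)) := by
        rw [Real.volume_closedBall, mul_div_assoc]
    _ = volume.restrict T (closedBall θ₀ (δ / L)) :=
        (restrict_eq_self _ ((closedBall_subset_ball hδ).trans hball)).symm
    _ ≤ _ := measure_mono hsub

lemma ENNReal.two_mul_le_add_sq (a b : ℝ≥0∞) : 2 * a * b ≤ a ^ 2 + b ^ 2 := by
  rcases eq_or_ne a ⊤ with rfl | ha; · simp
  rcases eq_or_ne b ⊤ with rfl | hb; · simp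
  lift a to ℝ≥0 using ha
  lift b to ℝ≥0 using hb
  exact_mod_cast _root_.two_mul_le_add_sq a b

section Schur

variable {α : Type*} [MeasurableSpace α] {m : Measure α} [SFinite m] {D : Set (α × α)}
  {C : ℝ≥0∞}

lemma setLIntegral_fst_le_of_measure_slice_le (hD : MeasurableSet D)
    (hC : ∀ s, m (Prod.mk s ⁻¹' D) ≤ C) {g : α → ℝ≥0∞} (hg : Measurable g) :
    ∫⁻ q in D, g q.1 ∂(m.prod m) ≤ C * ∫⁻ s, g s ∂m :=
  calc ∫⁻ q in D, g q.1 ∂(m.prod m) = ((m.withDensity g).prod m) D := by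
        rw [prod_withDensity_left hg, withDensity_apply _ hD]
    _ = ∫⁻ s, g s * m (Prod.mk s ⁻¹' D) ∂m := by
        rw [prod_apply hD, lintegral_withDensity_eq_lintegral_mul _ hg
          (measurable_measure_prodMk_left hD)]
        rfl
    _ ≤ ∫⁻ s, g s * C ∂m := by gcongr; exact hC _
    _ = C * ∫⁻ s, g s ∂m := by rw [lintegral_mul_const _ hg, mul_comm]

lemma setLIntegral_mul_le_of_swap_preimage_eq (hD : MeasurableSet D)
    (hsymm : Prod.swap ⁻¹' D = D) (hC : ∀ s, m (Prod.mk s ⁻¹' D) ≤ C) {f : α → ℝ≥0∞}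
    (hf : Measurable f) :
    ∫⁻ q in D, f q.1 * f q.2 ∂(m.prod m) ≤ C * ∫⁻ s, f s ^ 2 ∂m := by
  have hswap : ∫⁻ q in D, f q.2 ^ 2 ∂(m.prod m) = ∫⁻ q in D, f q.1 ^ 2 ∂(m.prod m) := by
    rw [← measurePreserving_swap.setLIntegral_comp_preimage hD
      (f := fun q : α × α => f q.2 ^ 2) (by fun_prop), hsymm]
    rfl
  -- `2 f(s) f(t) ≤ f(s)² + f(t)²`, and the symmetry of `D` turns the second term into the first.
  refine (ENNReal.mul_le_mul_iff_right two_ne_zero ENNReal.ofNat_ne_top).1 ?_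
  calc 2 * ∫⁻ q in D, f q.1 * f q.2 ∂(m.prod m)
      = ∫⁻ q in D, 2 * f q.1 * f q.2 ∂(m.prod m) := by
        rw [← lintegral_const_mul' _ _ ENNReal.ofNat_ne_top]; simp only [mul_assoc]
    _ ≤ ∫⁻ q in D, (f q.1 ^ 2 + f q.2 ^ 2) ∂(m.prod m) :=
        lintegral_mono fun q => ENNReal.two_mul_le_add_sq _ _
    _ = 2 * ∫⁻ q in D, f q.1 ^ 2 ∂(m.prod m) := by
        rw [lintegral_add_left (by fun_prop : Measurable fun q : α × α => f q.1 ^ 2), hswap,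
          two_mul]
    _ ≤ 2 * (C * ∫⁻ s, f s ^ 2 ∂m) := by
        gcongr; exact setLIntegral_fst_le_of_measure_slice_le hD hC (hf.pow_const 2)

end Schur

lemma prod_setOf_abs_sub_le_le {ν : Measure ℝ} [SFinite ν] (hν : ν ≪ volume) (δ : ℝ) :
    ν.prod ν {q | |q.1 - q.2| ≤ δ} ≤ ENNReal.ofReal (2 * δ) * ∫⁻ r, ν.rnDeriv volume r ^ 2 := by
  have hD : MeasurableSet {q : ℝ × ℝ | |q.1 - q.2| ≤ δ} :=
    measurableSet_le (by fun_prop) measurable_const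
  have hf : Measurable (ν.rnDeriv volume) := measurable_rnDeriv ν volume
  calc ν.prod ν {q | |q.1 - q.2| ≤ δ}
      = ∫⁻ q in {q | |q.1 - q.2| ≤ δ}, ν.rnDeriv volume q.1 * ν.rnDeriv volume q.2
          ∂(volume.prod volume) := by
        conv_lhs => rw [← withDensity_rnDeriv_eq ν volume hν]
        rw [prod_withDensity hf hf, withDensity_apply _ hD]
    _ ≤ _ := by
        refine setLIntegral_mul_le_of_swap_preimage_eq hD ?_ (fun s => ?_) hf
        · ext q; simp [abs_sub_comm]
        · refine le_of_eq ?_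
          rw [← Real.volume_closedBall s δ]
          congr 1; ext t; simp [Real.dist_eq, abs_sub_comm]

lemma prod_setOf_abs_projCoord_sub_le_le (μ : Measure ℂ) [SFinite μ] (θ : ℝ) {δ : ℝ}
    (hδ : 0 < δ) :
    μ.prod μ {p | |projCoord θ (p.1 - p.2)| ≤ δ} ≤ ENNReal.ofReal (2 * δ) * projL2sq θ μ := by
  have hP : Measurable (projCoord θ) :=
    (continuous_projCoord.comp (Continuous.prodMk_right θ)).measurable
  rw [projL2sq]
  split_ifs with hac
  · calc μ.prod μ {p | |projCoord θ (p.1 - p.2)| ≤ δ}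
        = (μ.map (projCoord θ)).prod (μ.map (projCoord θ)) {q | |q.1 - q.2| ≤ δ} := by
          rw [map_prod_map _ _ hP hP, map_apply (hP.prodMap hP)
            (measurableSet_le (by fun_prop) measurable_const)]
          simp only [projCoord_sub]; rfl
      _ ≤ _ := prod_setOf_abs_sub_le_le hac δ
  · rw [ENNReal.mul_top (by simpa using hδ)]
    exact le_top

lemma measurable_restrict_setOf_abs_projCoord_le (T : Set ℝ) (δ : ℝ) :
    Measurable fun z : ℂ => volume.restrict T {θ | |projCoord θ z| ≤ δ} :=
  measurable_measure_prodMk_left (measurableSet_le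
    (continuous_projCoord.comp continuous_swap).abs.measurable measurable_const)

lemma lintegral_lintegral_restrict_setOf_abs_projCoord_sub_le (μ : Measure ℂ) [SFinite μ]
    (T : Set ℝ) {δ : ℝ} (hδ : 0 < δ) :
    ∫⁻ x, ∫⁻ y, volume.restrict T {θ | |projCoord θ (x - y)| ≤ δ} ∂μ ∂μ
      ≤ ENNReal.ofReal (2 * δ) * ∫⁻ θ in T, projL2sq θ μ := by
  set S : Set ((ℂ × ℂ) × ℝ) := {q | |projCoord q.2 (q.1.1 - q.1.2)| ≤ δ}
  have hS : MeasurableSet S := measurableSet_le (continuous_projCoord.comp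
    (continuous_snd.prodMk (continuous_fst.fst.sub continuous_fst.snd))).abs.measurable
    measurable_const
  calc ∫⁻ x, ∫⁻ y, volume.restrict T {θ | |projCoord θ (x - y)| ≤ δ} ∂μ ∂μ
      = (μ.prod μ).prod (volume.restrict T) S := by
        rw [prod_apply hS]
        exact (lintegral_prod _ ((measurable_restrict_setOf_abs_projCoord_le T δ).comp
          measurable_sub).aemeasurable).symm
    _ = ∫⁻ θ in T, μ.prod μ {p | |projCoord θ (p.1 - p.2)| ≤ δ} := prod_apply_symm hS
    _ ≤ ∫⁻ θ in T, ENNReal.ofReal (2 * δ) * projL2sq θ μ :=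
        lintegral_mono fun θ => prod_setOf_abs_projCoord_sub_le_le μ θ hδ
    _ = ENNReal.ofReal (2 * δ) * ∫⁻ θ in T, projL2sq θ μ :=
        lintegral_const_mul' _ _ ENNReal.ofReal_ne_top

noncomputable def coneKernelApprox (T : Set ℝ) (δ : ℝ) (z : ℂ) : ℝ≥0∞ :=
  (ENNReal.ofReal (2 * δ))⁻¹ * volume.restrict T {θ | |projCoord θ z| ≤ δ}

lemma measurable_coneKernelApprox (T : Set ℝ) (δ : ℝ) : Measurable (coneKernelApprox T δ) :=
  (measurable_restrict_setOf_abs_projCoord_le T δ).const_mul _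

lemma lintegral_lintegral_coneKernelApprox_le (μ : Measure ℂ) [SFinite μ] (T : Set ℝ)
    {δ : ℝ} (hδ : 0 < δ) :
    ∫⁻ x, ∫⁻ y, coneKernelApprox T δ (x - y) ∂μ ∂μ ≤ ∫⁻ θ in T, projL2sq θ μ := by
  have h2δ : ENNReal.ofReal (2 * δ) ≠ 0 := by simpa using hδ
  have hinv : (ENNReal.ofReal (2 * δ))⁻¹ ≠ ⊤ := ENNReal.inv_ne_top.2 h2δ
  simp only [coneKernelApprox, lintegral_const_mul' _ _ hinv]
  rw [ENNReal.inv_mul_le_iff h2δ ENNReal.ofReal_ne_top]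
  exact lintegral_lintegral_restrict_setOf_abs_projCoord_sub_le μ T hδ

lemma ofReal_inv_norm_le_coneKernelApprox {I : Set ℝ} (hI : IsOpen I) {z : ℂ}
    (hz : z ∈ coneOf I \ {0}) :
    ∀ᶠ δ in 𝓝[>] 0, ENNReal.ofReal ‖z‖⁻¹ ≤ coneKernelApprox ((· + π / 2) '' I) δ z := by
  obtain ⟨⟨r, α, hα, rfl⟩, hz0⟩ := hz
  have hT : IsOpen ((· + π / 2) '' I) := (Homeomorph.addRight (π / 2)).isOpenMap I hI
  have hnorm : 0 < ‖(r : ℂ) * Complex.exp (α * Complex.I)‖₊ := by simpa using hz0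
  have hball := ofReal_le_restrict_setOf_abs_le_of_lipschitzWith hT hnorm
    (lipschitzWith_projCoord _) ⟨α, hα, rfl⟩ (projCoord_add_pi_div_two r α)
  filter_upwards [nhdsWithin_le_nhds hball, self_mem_nhdsWithin] with δ hδ (hδpos : 0 < δ)
  rw [coneKernelApprox, ← ENNReal.mul_le_iff_le_inv (by simpa using hδpos) ENNReal.ofReal_ne_top,
    ← ENNReal.ofReal_mul (by positivity), ← div_eq_mul_inv]
  exact hδ

theorem statement9_general (μ : Measure ℂ) [IsFiniteMeasure μ]
    (I : Set ℝ) (hIopen : IsOpen I) :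
    (∫⁻ x, ∫⁻ y, Set.indicator {y | x - y ∈ coneOf I \ {0}}
        (fun y => ENNReal.ofReal ‖x - y‖⁻¹) y ∂μ ∂μ)
      ≤ ∫⁻ θ in (fun θ => θ + π / 2) '' I, projL2sq θ μ := by
  set T := (fun θ => θ + π / 2) '' I
  calc _ ≤ ∫⁻ x, ∫⁻ y, liminf (fun δ => coneKernelApprox T δ (x - y)) (𝓝[>] 0) ∂μ ∂μ := by
        refine lintegral_mono fun x => lintegral_mono fun y => ?_
        by_cases hxy : y ∈ {y | x - y ∈ coneOf I \ {0}}
        · rw [indicator_of_mem hxy]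
          exact le_liminf_of_le (by isBoundedDefault)
            (ofReal_inv_norm_le_coneKernelApprox hIopen hxy)
        · rw [indicator_of_notMem hxy]
          exact zero_le
    _ ≤ ∫⁻ x, liminf (fun δ => ∫⁻ y, coneKernelApprox T δ (x - y) ∂μ) (𝓝[>] 0) ∂μ :=
        lintegral_mono fun x => lintegral_liminf_le fun δ =>
          (measurable_coneKernelApprox T δ).comp (measurable_const.sub measurable_id)
    _ ≤ liminf (fun δ => ∫⁻ x, ∫⁻ y, coneKernelApprox T δ (x - y) ∂μ ∂μ) (𝓝[>] 0) :=
        lintegral_liminf_le fun δ =>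
          ((measurable_coneKernelApprox T δ).comp measurable_sub).lintegral_prod_right'
    _ ≤ ∫⁻ θ in T, projL2sq θ μ :=
        liminf_le_of_frequently_le' <| Eventually.frequently <|
          eventually_mem_nhdsWithin.mono fun _ => lintegral_lintegral_coneKernelApprox_le μ T

/-- For a finite compactly supported Borel measure `μ` on `ℂ` and an open
set `I ⊆ [0,π]`, `∬_{x-y ∈ K_I \ {0}} |x-y|⁻¹ dμ(x) dμ(y) ≤ ∫_{I⊥} ‖P_θ μ‖₂² dθ`. -/
theorem statement9 (μ : Measure ℂ) [IsFiniteMeasure μ]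
    (hcomp : ∃ K : Set ℂ, IsCompact K ∧ μ Kᶜ = 0)
    (I : Set ℝ) (hIopen : IsOpen I) (hIsub : I ⊆ Set.Icc 0 π) :
    (∫⁻ x, ∫⁻ y, Set.indicator {y | x - y ∈ coneOf I \ {0}}
        (fun y => ENNReal.ofReal ‖x - y‖⁻¹) y ∂μ ∂μ)
      ≤ ∫⁻ θ in (fun θ => θ + π / 2) '' I, projL2sq θ μ :=
  statement9_general μ I hIopen
end

section
/- Let μ be a finite Borel measure on ℂ with compact support and let I ⊂ [0,π) be an open set. Let φ : ℝ² → [0,∞) be a C^∞ function with compact support and ∫φ = 1, set φ_ε(x) = ε^{−2} φ(x/ε) and μ_ε = μ * φ_ε for ε > 0. Then ∬_{x−y ∈ K_I∖{0}} |x−y|^{−1} dμ(x) dμ(y) ≤ limsup_{ε→0} ∬_{x−y ∈ K_I} |x−y|^{−1} dμ_ε(x) dμ_ε(y). -/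
open MeasureTheory Measure Set Filter Metric
open scoped ENNReal Real Topology Classical

/-- Mollification `μ * φ_ε` of a measure on `ℂ ≅ ℝ²`, where `φ_ε(x) = ε⁻² φ(x/ε)`:
the absolutely continuous measure with density `x ↦ ∫ φ_ε(x - y) dμ(y)`. -/
noncomputable def mollifyC (φ : ℂ → ℝ) (ε : ℝ) (μ : Measure ℂ) : Measure ℂ :=
  volume.withDensity fun x => ENNReal.ofReal ((ε ^ 2)⁻¹ * ∫ y, φ ((ε : ℂ)⁻¹ * (x - y)) ∂μ)

lemma arg_exp_mul_I_of_Ioc {θ : ℝ} (h : θ ∈ Set.Ioc (-π) π) :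
    (Complex.exp ((θ : ℂ) * Complex.I)).arg = θ := by
  rw [Complex.exp_mul_I]
  exact_mod_cast Complex.arg_cos_add_sin_mul_I h

lemma isOpen_coneOf_diff_zero {I : Set ℝ} (hIopen : IsOpen I) (hIsub : I ⊆ Set.Ico 0 π) :
    IsOpen (coneOf I \ {0}) := by
  have hI0 : (0:ℝ) ∉ I := by
    intro h0
    obtain ⟨δ, hδ, hball⟩ := Metric.isOpen_iff.1 hIopen 0 h0
    have hmem : -(δ/2) ∈ I := hball (by
      simp only [Metric.mem_ball, Real.dist_eq, sub_zero]
      rw [abs_of_nonpos (by linarith)]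
      linarith)
    have := (hIsub hmem).1; linarith
  have hIoo : I ⊆ Set.Ioo 0 π := fun θ hθ =>
    ⟨lt_of_le_of_ne (hIsub hθ).1 (fun h => hI0 (h ▸ hθ)), (hIsub hθ).2⟩
  set V : Set ℝ := I ∪ (fun θ => θ + π) ⁻¹' I with hV
  have hVopen : IsOpen V := hIopen.union (hIopen.preimage (continuous_add_right π))
  have hexp_shift : ∀ θ : ℝ, Complex.exp (((θ - π : ℝ) : ℂ) * Complex.I)
      = - Complex.exp ((θ : ℂ) * Complex.I) := by
    intro θ
    push_cast
    rw [sub_mul, Complex.exp_sub, Complex.exp_pi_mul_I]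
    simp [div_neg]
  have hkey : coneOf I \ {0} = Complex.arg ⁻¹' V := by
    ext z
    constructor
    · rintro ⟨⟨r, θ, hθ, rfl⟩, hz0⟩
      have hzne : (r:ℂ) * Complex.exp ((θ:ℂ)*Complex.I) ≠ 0 := by simpa using hz0
      have hr : r ≠ 0 := by rintro rfl; simp at hzne
      have hθoo := hIoo hθ
      rcases hr.lt_or_gt with hneg | hpos
      · have heq : (r:ℂ) * Complex.exp ((θ:ℂ)*Complex.I)
            = ((-r : ℝ):ℂ) * Complex.exp (((θ - π : ℝ):ℂ)*Complex.I) := by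
          rw [hexp_shift θ]; push_cast; ring
        have harg : ((r:ℂ) * Complex.exp ((θ:ℂ)*Complex.I)).arg = θ - π := by
          rw [heq, Complex.arg_real_mul _ (by linarith : (0:ℝ) < -r)]
          exact arg_exp_mul_I_of_Ioc ⟨by linarith [hθoo.1], by linarith [hθoo.2, Real.pi_pos]⟩
        refine Or.inr ?_
        simp only [Set.mem_preimage, harg]
        simpa using hθ
      · have harg : ((r:ℂ) * Complex.exp ((θ:ℂ)*Complex.I)).arg = θ := by
          rw [Complex.arg_real_mul _ hpos]
          exact arg_exp_mul_I_of_Ioc ⟨by linarith [hθoo.1, Real.pi_pos], le_of_lt hθoo.2⟩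
        exact Or.inl (by simpa only [Set.mem_preimage, harg] using hθ)
    · intro hz
      rcases hz with hz | hz
      · have hargne : z.arg ≠ 0 := fun h => hI0 (h ▸ hz)
        have hzne : z ≠ 0 := fun h => hargne (by simp [h])
        exact ⟨⟨‖z‖, z.arg, hz, (Complex.norm_mul_exp_arg_mul_I z).symm⟩,
          by simpa using hzne⟩
      · have hz' : z.arg + π ∈ I := hz
        have h2 := hIoo hz'
        have hzne : z ≠ 0 := by
          intro h
          rw [h, Complex.arg_zero] at h2
          simpa using h2.2
        refine ⟨⟨-‖z‖, z.arg + π, hz', ?_⟩, by simpa using hzne⟩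
        have : Complex.exp (((z.arg + π : ℝ) : ℂ) * Complex.I)
            = - Complex.exp ((z.arg : ℂ) * Complex.I) := by
          push_cast
          rw [add_mul, Complex.exp_add, Complex.exp_pi_mul_I]
          ring
        rw [this]
        push_cast
        rw [neg_mul_neg]
        exact (Complex.norm_mul_exp_arg_mul_I z).symm
  rw [isOpen_iff_mem_nhds]
  intro z hz
  rw [hkey] at hz ⊢
  have him : z.im ≠ 0 := by
    rcases hz with h | h
    · have hoo := hIoo h
      have hsin : 0 < Real.sin z.arg := Real.sin_pos_of_pos_of_lt_pi hoo.1 hoo.2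
      rw [Complex.sin_arg] at hsin
      intro h0
      rw [h0] at hsin
      simp at hsin
    · have hoo := hIoo h
      have hoo1 : 0 < z.arg + π := hoo.1
      have hoo2 : z.arg + π < π := hoo.2
      have hsin : Real.sin z.arg < 0 :=
        Real.sin_neg_of_neg_of_neg_pi_lt (by linarith) (by linarith)
      rw [Complex.sin_arg] at hsin
      intro h0
      rw [h0] at hsin
      simp at hsin
  have hc : ContinuousAt Complex.arg z :=
    Complex.continuousAt_arg (Complex.mem_slitPlane_iff.2 (Or.inr him))
  exact hc.preimage_mem_nhds (hVopen.mem_nhds hz)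


lemma lintegral_comp_add_smul {ε : ℝ} (hε : 0 < ε) (a : ℂ) {H : ℂ → ℝ≥0∞}
    (hH : Measurable H) :
    ∫⁻ u, H (a + ε • u) = ENNReal.ofReal ((ε ^ 2)⁻¹) * ∫⁻ z, H z := by
  have h1 : ∫⁻ u, H (a + ε • u)
      = ∫⁻ w, H (a + w) ∂(Measure.map (fun x : ℂ => ε • x) volume) :=
    (lintegral_map (hH.comp (measurable_id.const_add a)) (measurable_id.const_smul ε)).symm
  rw [h1, Measure.map_addHaar_smul volume hε.ne', lintegral_smul_measure,
    Complex.finrank_real_complex, lintegral_add_left_eq_self H a]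
  congr 1
  rw [abs_of_nonneg (by positivity)]

lemma mollifyC_eq_map (μ : Measure ℂ) [IsFiniteMeasure μ] (φ : ℂ → ℝ)
    (hφc : Continuous φ) (hφsupp : HasCompactSupport φ) (hφ0 : ∀ x, 0 ≤ φ x)
    {ε : ℝ} (hε : 0 < ε) :
    mollifyC φ ε μ = Measure.map (fun p : ℂ × ℂ => p.1 + ε • p.2)
      (μ.prod (volume.withDensity fun w => ENNReal.ofReal (φ w))) := by
  set Φ : ℂ → ℝ≥0∞ := fun w => ENNReal.ofReal (φ w) with hΦdef
  have hΦm : Measurable Φ := hφc.measurable.ennreal_ofReal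
  set ν : Measure ℂ := volume.withDensity Φ with hνdef
  set c : ℝ≥0∞ := ENNReal.ofReal ((ε ^ 2)⁻¹) with hcdef
  have hc : c ≠ ⊤ := ENNReal.ofReal_ne_top
  obtain ⟨C, hC⟩ := hφc.bounded_above_of_compact_support hφsupp
  have hT : Measurable (fun p : ℂ × ℂ => p.1 + ε • p.2) :=
    measurable_fst.add (measurable_snd.const_smul ε)
  have hεC : (ε : ℂ) ≠ 0 := by exact_mod_cast hε.ne'
  -- the kernel
  set K : ℂ → ℝ≥0∞ := fun z => ∫⁻ x, Φ ((ε : ℂ)⁻¹ * (z - x)) ∂μ with hKdef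
  have hinner : Measurable fun q : ℂ × ℂ => Φ ((ε : ℂ)⁻¹ * (q.1 - q.2)) :=
    hΦm.comp ((measurable_fst.sub measurable_snd).const_mul _)
  have hK : Measurable K := Measurable.lintegral_prod_right hinner
  refine Measure.ext fun s hs => ?_
  have hindm : Measurable (s.indicator (fun _ => (1:ℝ≥0∞))) :=
    measurable_const.indicator hs
  have hindt : ∀ z, s.indicator (fun _ => (1:ℝ≥0∞)) z ≠ ⊤ := by
    intro z; by_cases h : z ∈ s <;> simp [h]
  rw [Measure.map_apply hT hs, Measure.prod_apply (hT hs)]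
  have R1 : ∀ x : ℂ, ν ((fun y => x + ε • y) ⁻¹' s)
      = c * ∫⁻ z, s.indicator (fun _ => (1:ℝ≥0∞)) z * Φ ((ε : ℂ)⁻¹ * (z - x)) := by
    intro x
    have hBm : MeasurableSet ((fun y : ℂ => x + ε • y) ⁻¹' s) :=
      ((measurable_id.const_smul ε).const_add x) hs
    rw [hνdef, withDensity_apply _ hBm, ← lintegral_indicator hBm]
    have hpt : ∀ y : ℂ, ((fun y : ℂ => x + ε • y) ⁻¹' s).indicator Φ y
        = (fun z => s.indicator (fun _ => (1:ℝ≥0∞)) z * Φ ((ε : ℂ)⁻¹ * (z - x))) (x + ε • y) := by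
      intro y
      have hy : (ε : ℂ)⁻¹ * (x + ε • y - x) = y := by
        rw [Complex.real_smul, add_sub_cancel_left, inv_mul_cancel_left₀ hεC]
      show _ = s.indicator (fun _ => (1:ℝ≥0∞)) (x + ε • y) * Φ ((ε : ℂ)⁻¹ * (x + ε • y - x))
      by_cases h : x + ε • y ∈ s
      · rw [Set.indicator_of_mem (show y ∈ (fun y : ℂ => x + ε • y) ⁻¹' s from h),
          Set.indicator_of_mem h, hy, one_mul]
      · rw [Set.indicator_of_notMem (show y ∉ (fun y : ℂ => x + ε • y) ⁻¹' s from h),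
          Set.indicator_of_notMem h, zero_mul]
    rw [lintegral_congr hpt]
    exact lintegral_comp_add_smul hε x (hindm.mul (hΦm.comp ((measurable_id.sub measurable_const).const_mul _)))
  calc (mollifyC φ ε μ) s
      = ∫⁻ z, s.indicator (fun z => ENNReal.ofReal ((ε ^ 2)⁻¹ * ∫ y, φ ((ε : ℂ)⁻¹ * (z - y)) ∂μ)) z := by
        rw [mollifyC, withDensity_apply _ hs, ← lintegral_indicator hs]
    _ = ∫⁻ z, c * (s.indicator (fun _ => (1:ℝ≥0∞)) z * K z) := by
        refine lintegral_congr fun z => ?_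
        by_cases h : z ∈ s
        · rw [Set.indicator_of_mem h, Set.indicator_of_mem h]
          have hint : Integrable (fun y => φ ((ε : ℂ)⁻¹ * (z - y))) μ :=
            ⟨(hφc.comp (by continuity)).aestronglyMeasurable,
              HasFiniteIntegral.of_bounded (C := C) (Eventually.of_forall fun y => hC _)⟩
          rw [ENNReal.ofReal_mul (by positivity),
            ofReal_integral_eq_lintegral_ofReal hint (Eventually.of_forall fun y => hφ0 _)]
          rw [one_mul]
        · rw [Set.indicator_of_notMem h, Set.indicator_of_notMem h]
          simp
    _ = c * ∫⁻ z, s.indicator (fun _ => (1:ℝ≥0∞)) z * K z :=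
        lintegral_const_mul' _ _ hc
    _ = c * ∫⁻ z, ∫⁻ x, s.indicator (fun _ => (1:ℝ≥0∞)) z * Φ ((ε : ℂ)⁻¹ * (z - x)) ∂μ := by
        congr 1
        exact lintegral_congr fun z => (lintegral_const_mul' _ _ (hindt z)).symm
    _ = c * ∫⁻ x, (∫⁻ z, s.indicator (fun _ => (1:ℝ≥0∞)) z * Φ ((ε : ℂ)⁻¹ * (z - x))) ∂μ := by
        congr 1
        exact lintegral_lintegral_swap
          (((hindm.comp measurable_fst).mul
            (hΦm.comp ((measurable_fst.sub measurable_snd).const_mul _))).aemeasurable)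
    _ = ∫⁻ x, ν ((fun y => x + ε • y) ⁻¹' s) ∂μ := by
        rw [← lintegral_const_mul' _ _ hc]
        exact lintegral_congr fun x => (R1 x).symm
    _ = ∫⁻ x, ν (Prod.mk x ⁻¹' ((fun p : ℂ × ℂ => p.1 + ε • p.2) ⁻¹' s)) ∂μ := rfl


/-- For a finite compactly supported Borel measure `μ` on `ℂ`, an open set
`I ⊆ [0,π)`, and a nonnegative compactly supported `C^∞` mollifier `φ` with `∫φ = 1`,
the conical energy of `μ` over `K_I \ {0}` is at most the limsup as `ε → 0⁺` of the conical
energies of the mollifications `μ_ε = μ * φ_ε` over `K_I`. -/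
theorem statement10 (μ : Measure ℂ) [IsFiniteMeasure μ]
    (hcomp : ∃ K : Set ℂ, IsCompact K ∧ μ Kᶜ = 0)
    (I : Set ℝ) (hIopen : IsOpen I) (hIsub : I ⊆ Set.Ico 0 π)
    (φ : ℂ → ℝ) (hφsm : ContDiff ℝ (⊤ : ℕ∞) φ) (hφsupp : HasCompactSupport φ)
    (hφ0 : ∀ x, 0 ≤ φ x) (hφ1 : ∫ x, φ x = 1) :
    (∫⁻ x, ∫⁻ y, Set.indicator {y | x - y ∈ coneOf I \ {0}}
        (fun y => ENNReal.ofReal ‖x - y‖⁻¹) y ∂μ ∂μ)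
      ≤ Filter.limsup (fun ε : ℝ =>
          ∫⁻ x, ∫⁻ y, Set.indicator {y | x - y ∈ coneOf I}
            (fun y => ENNReal.ofReal ‖x - y‖⁻¹) y ∂(mollifyC φ ε μ) ∂(mollifyC φ ε μ))
          (𝓝[>] (0 : ℝ)) := by
  classical
  have hφc : Continuous φ := hφsm.continuous
  have hU : IsOpen (coneOf I \ {0}) := isOpen_coneOf_diff_zero hIopen hIsub
  have hrew1 : ∀ x y : ℂ, Set.indicator {y | x - y ∈ coneOf I \ {0}}
      (fun y => ENNReal.ofReal ‖x - y‖⁻¹) y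
      = (coneOf I \ {0}).indicator (fun z => ENNReal.ofReal ‖z‖⁻¹) (x - y) := by
    intro x y
    by_cases h : x - y ∈ coneOf I \ {0}
    · rw [Set.indicator_of_mem h,
        Set.indicator_of_mem (show y ∈ {y | x - y ∈ coneOf I \ {0}} from h)]
    · rw [Set.indicator_of_notMem h,
        Set.indicator_of_notMem (show y ∉ {y | x - y ∈ coneOf I \ {0}} from h)]
  have hrew2 : ∀ x y : ℂ, Set.indicator {y | x - y ∈ coneOf I}
      (fun y => ENNReal.ofReal ‖x - y‖⁻¹) y
      = (coneOf I \ {0}).indicator (fun z => ENNReal.ofReal ‖z‖⁻¹) (x - y) := by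
    intro x y
    by_cases h : x - y ∈ coneOf I \ {0}
    · rw [Set.indicator_of_mem h,
        Set.indicator_of_mem (show y ∈ {y | x - y ∈ coneOf I} from h.1)]
    · rw [Set.indicator_of_notMem h]
      by_cases h2 : x - y ∈ coneOf I
      · have h0 : x - y = 0 := by
          by_contra hne
          exact h ⟨h2, hne⟩
        rw [Set.indicator_of_mem (show y ∈ {y | x - y ∈ coneOf I} from h2)]
        simp [h0]
      · rw [Set.indicator_of_notMem (show y ∉ {y | x - y ∈ coneOf I} from h2)]
  simp only [hrew1, hrew2]
  set g : ℂ → ℝ≥0∞ := (coneOf I \ {0}).indicator (fun z => ENNReal.ofReal ‖z‖⁻¹) with hgdef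
  have hgm : Measurable g :=
    (measurable_norm.inv.ennreal_ofReal).indicator hU.measurableSet
  -- the reference measure ν with density φ
  set Φ : ℂ → ℝ≥0∞ := fun w => ENNReal.ofReal (φ w) with hΦdef
  have hΦm : Measurable Φ := hφc.measurable.ennreal_ofReal
  set ν : Measure ℂ := volume.withDensity Φ with hνdef
  have hν1 : ν Set.univ = 1 := by
    rw [hνdef, withDensity_apply _ MeasurableSet.univ, Measure.restrict_univ,
      ← ofReal_integral_eq_lintegral_ofReal
        (hφc.integrable_of_hasCompactSupport hφsupp) (Eventually.of_forall hφ0),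
      hφ1, ENNReal.ofReal_one]
  haveI : IsProbabilityMeasure ν := ⟨hν1⟩
  set ρ : Measure (ℂ × ℂ) := μ.prod ν with hρdef
  set P : Measure ((ℂ × ℂ) × ℂ × ℂ) := ρ.prod ρ with hPdef
  set G : ℝ → ((ℂ × ℂ) × ℂ × ℂ) → ℝ≥0∞ :=
    fun ε ω => g (ω.1.1 - ω.2.1 + ε • (ω.1.2 - ω.2.2)) with hGdef
  have hGm : ∀ ε, Measurable (G ε) := by
    intro ε
    apply hgm.comp
    exact ((measurable_fst.fst).sub (measurable_snd.fst)).add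
      (((measurable_fst.snd).sub (measurable_snd.snd)).const_smul ε)
  -- Claim 2 : the μ-energy equals the P integral of G 0
  have hBm : Measurable fun x : ℂ => ∫⁻ y, g (x - y) ∂μ :=
    Measurable.lintegral_prod_right (hgm.comp (measurable_fst.sub measurable_snd))
  have claim2 : (∫⁻ x, ∫⁻ y, g (x - y) ∂μ ∂μ) = ∫⁻ ω, G 0 ω ∂P := by
    have h1 : ∫⁻ ω, G 0 ω ∂P = ∫⁻ ω, g (ω.1.1 - ω.2.1) ∂P := by
      refine lintegral_congr fun ω => ?_
      simp [hGdef]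
    have hm1 : Measurable fun ω : (ℂ × ℂ) × ℂ × ℂ => g (ω.1.1 - ω.2.1) :=
      hgm.comp ((measurable_fst.fst).sub (measurable_snd.fst))
    rw [h1, hPdef, lintegral_prod _ hm1.aemeasurable]
    have h2 : ∀ p : ℂ × ℂ, (∫⁻ q, g (p.1 - q.1) ∂ρ) = ∫⁻ y, g (p.1 - y) ∂μ := by
      intro p
      rw [hρdef, lintegral_prod (fun q : ℂ × ℂ => g (p.1 - q.1))
        ((hgm.comp (measurable_const.sub measurable_fst)).aemeasurable)]
      simp
    rw [lintegral_congr h2, hρdef,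
      lintegral_prod (fun p : ℂ × ℂ => ∫⁻ y, g (p.1 - y) ∂μ)
        ((hBm.comp measurable_fst).aemeasurable)]
    simp
  -- Claim 1 : for ε > 0 the mollified energy equals the P integral of G ε
  have claim1 : ∀ ε : ℝ, 0 < ε →
      (∫⁻ x, ∫⁻ y, g (x - y) ∂(mollifyC φ ε μ) ∂(mollifyC φ ε μ)) = ∫⁻ ω, G ε ω ∂P := by
    intro ε hε
    rw [mollifyC_eq_map μ φ hφc hφsupp hφ0 hε]
    set T : ℂ × ℂ → ℂ := fun p => p.1 + ε • p.2 with hTdef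
    have hT : Measurable T := measurable_fst.add (measurable_snd.const_smul ε)
    have h1 : ∀ x : ℂ, ∫⁻ y, g (x - y) ∂(Measure.map T ρ) = ∫⁻ q, g (x - T q) ∂ρ := fun x =>
      lintegral_map (hgm.comp (measurable_const.sub measurable_id)) hT
    change ∫⁻ x, ∫⁻ y, g (x - y) ∂(Measure.map T ρ) ∂(Measure.map T ρ) = _
    simp only [h1]
    have hA : Measurable fun x : ℂ => ∫⁻ q, g (x - T q) ∂ρ :=
      Measurable.lintegral_prod_right (hgm.comp (measurable_fst.sub (hT.comp measurable_snd)))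
    rw [lintegral_map hA hT]
    have hm2 : Measurable fun ω : (ℂ × ℂ) × ℂ × ℂ => g (T ω.1 - T ω.2) :=
      hgm.comp ((hT.comp measurable_fst).sub (hT.comp measurable_snd))
    calc ∫⁻ p, ∫⁻ q, g (T p - T q) ∂ρ ∂ρ
        = ∫⁻ ω, g (T ω.1 - T ω.2) ∂P := (lintegral_prod _ hm2.aemeasurable).symm
      _ = ∫⁻ ω, G ε ω ∂P := by
          refine lintegral_congr fun ω => ?_
          have : T ω.1 - T ω.2 = ω.1.1 - ω.2.1 + ε • (ω.1.2 - ω.2.2) := by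
            simp only [hTdef, smul_sub]
            abel
          rw [hGdef, this]
  -- limsup reduction
  rw [limsup_eq]
  refine le_sInf fun a ha => ?_
  obtain ⟨e, he⟩ := Filter.exists_seq_tendsto (𝓝[>] (0 : ℝ))
  have hev : ∀ᶠ n in atTop,
      (∫⁻ x, ∫⁻ y, g (x - y) ∂(mollifyC φ (e n) μ) ∂(mollifyC φ (e n) μ)) ≤ a :=
    he.eventually ha
  have hpos : ∀ᶠ n in atTop, 0 < e n := he.eventually self_mem_nhdsWithin
  have hlim0 : Tendsto e atTop (𝓝 0) := he.mono_right nhdsWithin_le_nhds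
  -- Claim 3 : lower semicontinuity pointwise
  have claim3 : ∀ ω, G 0 ω ≤ liminf (fun n => G (e n) ω) atTop := by
    intro ω
    have hG0 : G 0 ω = g (ω.1.1 - ω.2.1) := by simp [hGdef]
    by_cases hw : ω.1.1 - ω.2.1 ∈ coneOf I \ {0}
    · have htend : Tendsto (fun n => ω.1.1 - ω.2.1 + e n • (ω.1.2 - ω.2.2)) atTop
          (𝓝 (ω.1.1 - ω.2.1)) := by
        have h1 := hlim0.smul_const (ω.1.2 - ω.2.2)
        rw [zero_smul] at h1
        simpa using tendsto_const_nhds.add h1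
      have hwne : ω.1.1 - ω.2.1 ≠ 0 := fun h => hw.2 (by simp [h])
      have hcf : ContinuousAt (fun z : ℂ => ENNReal.ofReal ‖z‖⁻¹) (ω.1.1 - ω.2.1) :=
        ENNReal.continuous_ofReal.continuousAt.comp
          ((continuousAt_inv₀ (norm_ne_zero_iff.mpr hwne)).comp continuous_norm.continuousAt)
      have hevU : ∀ᶠ n in atTop, ω.1.1 - ω.2.1 + e n • (ω.1.2 - ω.2.2) ∈ coneOf I \ {0} :=
        htend.eventually (hU.mem_nhds hw)
      have htg : Tendsto (fun n => G (e n) ω) atTop (𝓝 (g (ω.1.1 - ω.2.1))) := by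
        have h1 : Tendsto (fun n => ENNReal.ofReal ‖ω.1.1 - ω.2.1 + e n • (ω.1.2 - ω.2.2)‖⁻¹)
            atTop (𝓝 (ENNReal.ofReal ‖ω.1.1 - ω.2.1‖⁻¹)) := hcf.tendsto.comp htend
        have h2 : g (ω.1.1 - ω.2.1) = ENNReal.ofReal ‖ω.1.1 - ω.2.1‖⁻¹ := by
          rw [hgdef]; exact Set.indicator_of_mem hw _
        rw [h2]
        refine Tendsto.congr' (hevU.mono fun n hn => ?_) h1
        simp only [hGdef, hgdef]
        rw [Set.indicator_of_mem hn]
      rw [hG0, ← htg.liminf_eq]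
    · rw [hG0, hgdef, Set.indicator_of_notMem hw]
      exact zero_le
  calc (∫⁻ x, ∫⁻ y, g (x - y) ∂μ ∂μ)
      = ∫⁻ ω, G 0 ω ∂P := claim2
    _ ≤ ∫⁻ ω, liminf (fun n => G (e n) ω) atTop ∂P := lintegral_mono claim3
    _ ≤ liminf (fun n => ∫⁻ ω, G (e n) ω ∂P) atTop := lintegral_liminf_le fun n => hGm (e n)
    _ = liminf (fun n => ∫⁻ x, ∫⁻ y, g (x - y)
          ∂(mollifyC φ (e n) μ) ∂(mollifyC φ (e n) μ)) atTop :=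
        liminf_congr (hpos.mono fun n hn => (claim1 (e n) hn).symm)
    _ ≤ a := liminf_le_of_frequently_le' hev.frequently
end

section
/- Let 1 ≤ n ≤ d−1, let x ∈ ℝ^d ∖ {0}, and let A : ℝ^{d−1} → ℝ^d be a linear map with AᵀA = id whose image is the orthogonal complement of x. Then the map Ψ(V) = span(A(V) ∪ {x}) is a bijection from G(d−1, n−1) onto G_x = {V ∈ G(d,n) : x ∈ V}, and it is an isometry for the metric d(V,W) = ‖P_V − P_W‖: for all V, W ∈ G(d−1,n−1), ‖P_{ΨV} − P_{ΨW}‖_{ℝ^d→ℝ^d} = ‖P_V − P_W‖_{ℝ^{d−1}→ℝ^{d−1}}. -/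
/-!
Since `A` is an isometry onto `xᗮ`, the subspace `Ψ V = A V ⊔ span {x}` is an orthogonal sum,
with inverse `W ↦ A⁻¹ (W ⊓ xᗮ)` on subspaces containing `x`. Its orthogonal projection is
`A P_V A† + P_x`, so `P_{Ψ V} - P_{Ψ W} = A (P_V - P_W) A†`, and conjugating by an isometry
preserves the operator norm.
-/

open MeasureTheory Measure Set Filter Metric
open scoped ENNReal Real Topology Classical

noncomputable def projCLM {d : ℕ} (U : Submodule ℝ (EuclideanSpace ℝ (Fin d))) :
    EuclideanSpace ℝ (Fin d) →L[ℝ] EuclideanSpace ℝ (Fin d) :=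
  U.subtypeL.comp (U.orthogonalProjectionOnto)

theorem projCLM_eq_starProjection {d : ℕ} (U : Submodule ℝ (EuclideanSpace ℝ (Fin d))) :
    projCLM U = U.starProjection :=
  rfl

open Module
open scoped InnerProductSpace InnerProduct

variable {𝕜 E F : Type*} [RCLike 𝕜] [NormedAddCommGroup E] [InnerProductSpace 𝕜 E]
  [NormedAddCommGroup F] [InnerProductSpace 𝕜 F]

namespace ContinuousLinearMap

variable [CompleteSpace E] [CompleteSpace F]

theorem norm_comp_comp_adjoint_of_adjoint_comp_self {A : E →L[𝕜] F} (hA : A† ∘L A = 1)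
    (T : E →L[𝕜] E) : ‖A ∘L T ∘L A†‖ = ‖T‖ := by
  let f : E →ₗᵢ[𝕜] F := ⟨A, (norm_map_iff_adjoint_comp_self A).2 hA⟩
  calc ‖A ∘L T ∘L A†‖ = ‖T ∘L A†‖ := f.norm_toContinuousLinearMap_comp
    _ = ‖(T ∘L A†)†‖ := (adjoint.norm_map _).symm
    _ = ‖A ∘L T†‖ := by rw [adjoint_comp, adjoint_adjoint]
    _ = ‖T‖ := f.norm_toContinuousLinearMap_comp.trans (adjoint.norm_map T)

end ContinuousLinearMap

namespace Submodule

section Lattice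

variable {A : E →ₗ[𝕜] F} {L : Submodule 𝕜 F}

theorem map_sup_inf_orthogonal (hA : LinearMap.range A ≤ Lᗮ) (V : Submodule 𝕜 E) :
    (V.map A ⊔ L) ⊓ Lᗮ = V.map A := by
  rw [sup_inf_assoc_of_le _ (LinearMap.map_le_range.trans hA), inf_orthogonal_eq_bot, sup_bot_eq]

theorem injective_map_sup (hinj : Function.Injective A) (hA : LinearMap.range A ≤ Lᗮ) :
    Function.Injective fun V : Submodule 𝕜 E => V.map A ⊔ L := fun V W h =>
  map_injective_of_injective hinj <| by
    simpa only [map_sup_inf_orthogonal hA] using congr_arg (· ⊓ Lᗮ) h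

theorem map_comap_sup_eq [L.HasOrthogonalProjection] (hA : LinearMap.range A = Lᗮ)
    {W : Submodule 𝕜 F} (hLW : L ≤ W) : (W.comap A).map A ⊔ L = W := by
  rw [map_comap_eq, hA, sup_comm, sup_orthogonal_inf_of_hasOrthogonalProjection hLW]

theorem finrank_map_sup (hinj : Function.Injective A) (hA : LinearMap.range A ≤ Lᗮ)
    (V : Submodule 𝕜 E) [FiniteDimensional 𝕜 V] [FiniteDimensional 𝕜 L] :
    finrank 𝕜 ↥(V.map A ⊔ L) = finrank 𝕜 V + finrank 𝕜 L := by
  have hdisj : V.map A ⊓ L = ⊥ :=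
    disjoint_iff.1 (L.orthogonal_disjoint.symm.mono_left (LinearMap.map_le_range.trans hA))
  have := finrank_sup_add_finrank_inf_eq (V.map A) L
  rwa [hdisj, finrank_bot, add_zero, ← (equivMapOfInjective A hinj V).finrank_eq] at this

theorem bijOn_map_sup [FiniteDimensional 𝕜 E] [FiniteDimensional 𝕜 F]
    (hinj : Function.Injective A) (hA : LinearMap.range A = Lᗮ) (k : ℕ) :
    Set.BijOn (fun V : Submodule 𝕜 E => V.map A ⊔ L) {V | finrank 𝕜 V = k}
      {W | finrank 𝕜 W = k + finrank 𝕜 L ∧ L ≤ W} := by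
  refine ⟨fun V hV => ⟨by rw [finrank_map_sup hinj hA.le, hV], le_sup_right⟩,
    (injective_map_sup hinj hA.le).injOn,
    fun W ⟨hW, hLW⟩ => ⟨W.comap A, ?_, map_comap_sup_eq hA hLW⟩⟩
  have := finrank_map_sup hinj hA.le (W.comap A)
  rw [map_comap_sup_eq hA hLW, hW] at this
  exact (Nat.add_right_cancel this).symm

end Lattice

theorem starProjection_sup_of_isOrtho {K L : Submodule 𝕜 F} [K.HasOrthogonalProjection]
    [L.HasOrthogonalProjection] [(K ⊔ L).HasOrthogonalProjection] (h : K ⟂ L) :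
    (K ⊔ L).starProjection = K.starProjection + L.starProjection := by
  ext v
  show _ = K.starProjection v + L.starProjection v
  refine eq_starProjection_of_mem_of_inner_eq_zero
    (add_mem_sup (K.starProjection_apply_mem v) (L.starProjection_apply_mem v)) fun w hw => ?_
  obtain ⟨k, hk, l, hl, rfl⟩ := mem_sup.1 hw
  have hKl : ⟪K.starProjection v, l⟫_𝕜 = 0 := h.inner_eq (K.starProjection_apply_mem v) hl
  have hLk : ⟪L.starProjection v, k⟫_𝕜 = 0 := h.symm.inner_eq (L.starProjection_apply_mem v) hk
  have hk' : ⟪v - (K.starProjection v + L.starProjection v), k⟫_𝕜 = 0 := by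
    rw [← sub_sub, inner_sub_left, starProjection_inner_eq_zero v k hk, hLk, sub_zero]
  have hl' : ⟪v - (K.starProjection v + L.starProjection v), l⟫_𝕜 = 0 := by
    rw [add_comm, ← sub_sub, inner_sub_left, starProjection_inner_eq_zero v l hl, hKl, sub_zero]
  rw [inner_add_right, hk', hl', add_zero]

section Isometry

variable [CompleteSpace E] [CompleteSpace F] {A : E →L[𝕜] F}

theorem starProjection_map_of_adjoint_comp_self (hA : A† ∘L A = 1)
    (V : Submodule 𝕜 E) [V.HasOrthogonalProjection]
    [(V.map (A : E →ₗ[𝕜] F)).HasOrthogonalProjection] :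
    (V.map (A : E →ₗ[𝕜] F)).starProjection = A ∘L V.starProjection ∘L A† := by
  ext u
  rw [ContinuousLinearMap.comp_apply, ContinuousLinearMap.comp_apply]
  refine eq_starProjection_of_mem_of_inner_eq_zero
    (mem_map_of_mem (f := (A : E →ₗ[𝕜] F)) (V.starProjection_apply_mem _)) ?_
  rintro _ ⟨v, hv, rfl⟩
  have hAA : ∀ y, (A†) (A y) = y := fun y => by simpa using ContinuousLinearMap.ext_iff.1 hA y
  rw [ContinuousLinearMap.coe_coe, ← ContinuousLinearMap.adjoint_inner_left, map_sub, hAA]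
  exact starProjection_inner_eq_zero _ v hv

variable {L : Submodule 𝕜 F} [FiniteDimensional 𝕜 L]

theorem starProjection_map_sup (hA : A† ∘L A = 1)
    (hrange : LinearMap.range (A : E →ₗ[𝕜] F) ≤ Lᗮ) (V : Submodule 𝕜 E)
    [FiniteDimensional 𝕜 V] :
    (V.map (A : E →ₗ[𝕜] F) ⊔ L).starProjection =
      A ∘L V.starProjection ∘L A† + L.starProjection := by
  rw [starProjection_sup_of_isOrtho (isOrtho_iff_le.2 (LinearMap.map_le_range.trans hrange)),
    starProjection_map_of_adjoint_comp_self hA]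

theorem norm_starProjection_map_sup_sub (hA : A† ∘L A = 1)
    (hrange : LinearMap.range (A : E →ₗ[𝕜] F) ≤ Lᗮ) (V W : Submodule 𝕜 E)
    [FiniteDimensional 𝕜 V] [FiniteDimensional 𝕜 W] :
    ‖(V.map (A : E →ₗ[𝕜] F) ⊔ L).starProjection - (W.map (A : E →ₗ[𝕜] F) ⊔ L).starProjection‖ =
      ‖V.starProjection - W.starProjection‖ := by
  rw [starProjection_map_sup hA hrange, starProjection_map_sup hA hrange,
    add_sub_add_right_eq_sub, ← ContinuousLinearMap.comp_sub, ← ContinuousLinearMap.sub_comp,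
    ContinuousLinearMap.norm_comp_comp_adjoint_of_adjoint_comp_self hA]

end Isometry

end Submodule

theorem statement12_general (d n : ℕ) (hn : 1 ≤ n)
    (x : EuclideanSpace ℝ (Fin d)) (hx : x ≠ 0)
    (A : EuclideanSpace ℝ (Fin (d - 1)) →L[ℝ] EuclideanSpace ℝ (Fin d))
    (hA : (ContinuousLinearMap.adjoint A).comp A = ContinuousLinearMap.id ℝ _)
    (hrange : LinearMap.range (A : EuclideanSpace ℝ (Fin (d - 1)) →ₗ[ℝ] EuclideanSpace ℝ (Fin d))
      = (Submodule.span ℝ {x})ᗮ) :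
    Set.BijOn
        (fun V : Submodule ℝ (EuclideanSpace ℝ (Fin (d - 1))) =>
          Submodule.map (A : EuclideanSpace ℝ (Fin (d - 1)) →ₗ[ℝ] EuclideanSpace ℝ (Fin d)) V
            ⊔ Submodule.span ℝ {x})
        {V : Submodule ℝ (EuclideanSpace ℝ (Fin (d - 1))) | Module.finrank ℝ V = n - 1}
        {W : Submodule ℝ (EuclideanSpace ℝ (Fin d)) | Module.finrank ℝ W = n ∧ x ∈ W} ∧
      ∀ V W : Submodule ℝ (EuclideanSpace ℝ (Fin (d - 1))),
        Module.finrank ℝ V = n - 1 → Module.finrank ℝ W = n - 1 →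
        ‖projCLM (Submodule.map (A : EuclideanSpace ℝ (Fin (d - 1)) →ₗ[ℝ]
              EuclideanSpace ℝ (Fin d)) V ⊔ Submodule.span ℝ {x})
          - projCLM (Submodule.map (A : EuclideanSpace ℝ (Fin (d - 1)) →ₗ[ℝ]
              EuclideanSpace ℝ (Fin d)) W ⊔ Submodule.span ℝ {x})‖
          = ‖projCLM V - projCLM W‖ := by
  have hinj : Function.Injective A :=
    ((ContinuousLinearMap.isometry_iff_adjoint_comp_self A).2 hA).injective
  refine ⟨?_, fun V W _ _ => ?_⟩
  · convert Submodule.bijOn_map_sup hinj hrange (n - 1) using 1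
    ext W
    simp only [Set.mem_ofPred_eq, finrank_span_singleton hx, Nat.sub_add_cancel hn,
      Submodule.span_singleton_le_iff_mem]
  · simp only [projCLM_eq_starProjection]
    exact Submodule.norm_starProjection_map_sup_sub hA hrange.le V W

/-- Let `1 ≤ n ≤ d-1`, `x ∈ ℝ^d \ {0}`, and let `A : ℝ^{d-1} → ℝ^d` be a
linear isometry (`AᵀA = id`) with range the orthogonal complement of `x`. Then
`Ψ(V) = span(A(V) ∪ {x})` is a bijection from `G(d-1, n-1)` onto `G_x = {V ∈ G(d,n) : x ∈ V}`
and it is an isometry for the metric `d(V,W) = ‖P_V - P_W‖`. -/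
theorem statement12 (d n : ℕ) (hn : 1 ≤ n) (hnd : n ≤ d - 1)
    (x : EuclideanSpace ℝ (Fin d)) (hx : x ≠ 0)
    (A : EuclideanSpace ℝ (Fin (d - 1)) →L[ℝ] EuclideanSpace ℝ (Fin d))
    (hA : (ContinuousLinearMap.adjoint A).comp A = ContinuousLinearMap.id ℝ _)
    (hrange : LinearMap.range (A : EuclideanSpace ℝ (Fin (d - 1)) →ₗ[ℝ] EuclideanSpace ℝ (Fin d))
      = (Submodule.span ℝ {x})ᗮ) :
    Set.BijOn
        (fun V : Submodule ℝ (EuclideanSpace ℝ (Fin (d - 1))) =>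
          Submodule.map (A : EuclideanSpace ℝ (Fin (d - 1)) →ₗ[ℝ] EuclideanSpace ℝ (Fin d)) V
            ⊔ Submodule.span ℝ {x})
        {V : Submodule ℝ (EuclideanSpace ℝ (Fin (d - 1))) | Module.finrank ℝ V = n - 1}
        {W : Submodule ℝ (EuclideanSpace ℝ (Fin d)) | Module.finrank ℝ W = n ∧ x ∈ W} ∧
      ∀ V W : Submodule ℝ (EuclideanSpace ℝ (Fin (d - 1))),
        Module.finrank ℝ V = n - 1 → Module.finrank ℝ W = n - 1 →
        ‖projCLM (Submodule.map (A : EuclideanSpace ℝ (Fin (d - 1)) →ₗ[ℝ]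
              EuclideanSpace ℝ (Fin d)) V ⊔ Submodule.span ℝ {x})
          - projCLM (Submodule.map (A : EuclideanSpace ℝ (Fin (d - 1)) →ₗ[ℝ]
              EuclideanSpace ℝ (Fin d)) W ⊔ Submodule.span ℝ {x})‖
          = ‖projCLM V - projCLM W‖ :=
  statement12_general d n hn x hx A hA hrange
end

section
/- Let E ⊂ ℂ be compact, let I ⊂ [0,π) be an interval with ℋ¹(I) > 0, and let μ be a finite Borel measure supported on E with 0 < ∫_I ‖P_θμ‖₂² dθ < ∞. Set λ = (1/μ(E)) ∫_I ‖P_θμ‖₂² dθ. Then there exists a compact set F ⊂ E such that the measure σ = (ℋ¹(I)/(4λ)) · μ|_F satisfies: σ(B(x,r)) ≤ r for all x ∈ ℂ and r > 0; σ(F) ≥ (ℋ¹(I)/(16λ)) μ(E); and ∫_I ‖P_θσ‖₂² dθ ≤ ℋ¹(I) · σ(F). -/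
/-!
Let `c = ℋ¹(I)/(4λ)` and `K = c⁻¹`. Greedily remove from `E` closed balls `B(x, r)` carrying more
than `K r` of the remaining mass, each time one of nearly maximal such mass. For a removed piece
`G ⊆ B(x, r)` and the density `f_θ` of `P_θ μ`, Cauchy–Schwarz on the interval `P_θ B(x, r)` of
length `2r` gives `μ(G)² ≤ 2r ∫_G f_θ ∘ P_θ dμ`, hence `K μ(G) ≤ 2 ∫_G f_θ ∘ P_θ dμ`. Summing over
the disjoint pieces and integrating over `θ ∈ I`, the removed mass is at most
`2 ∫_I ‖P_θ μ‖₂² / (K ℋ¹(I)) = μ(E)/2`. No ball is heavy for what is left, because the removed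
masses are summable; `F` is a compact subset carrying half of its mass. The bound on
`∫_I ‖P_θ σ‖₂²` follows since `‖P_θ ·‖₂²` is monotone and homogeneous of degree 2.
-/

open MeasureTheory Measure Set Filter Metric
open scoped ENNReal Real Topology Classical

namespace MeasureTheory.Measure

variable {α : Type*} [MeasurableSpace α]

theorem rnDeriv_le_rnDeriv_of_le {μ₁ μ₂ : Measure α} (ν : Measure α) [SigmaFinite ν]
    [IsFiniteMeasure μ₂] (h : μ₁ ≤ μ₂) : μ₁.rnDeriv ν ≤ᵐ[ν] μ₂.rnDeriv ν := by
  have : IsFiniteMeasure μ₁ := isFiniteMeasure_of_le μ₂ h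
  have : IsFiniteMeasure (μ₂ - μ₁) := isFiniteMeasure_of_le μ₂ sub_le
  have hadd := rnDeriv_add (μ₂ - μ₁) μ₁ ν
  rw [sub_add_cancel_of_le h] at hadd
  filter_upwards [hadd] with x hx
  simp [hx]

/-- Cauchy–Schwarz for the density of a measure carried by `J`. -/
theorem measure_univ_sq_le_mul_lintegral_rnDeriv_sq {ν m : Measure α} [SigmaFinite ν]
    [SigmaFinite m] (hν : ν ≪ m) {J : Set α} (hJ : MeasurableSet J) (hνJ : ν Jᶜ = 0) :
    ν univ ^ 2 ≤ m J * ∫⁻ x, ν.rnDeriv m x ^ 2 ∂m := by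
  set g := ν.rnDeriv m
  have hνJ' : ν univ = ∫⁻ x in J, g x ∂m := by
    rw [setLIntegral_rnDeriv hν, ← measure_add_measure_compl hJ, hνJ, add_zero]
  have hCS : ∫⁻ x in J, g x * 1 ∂m ≤
      (∫⁻ x in J, g x ^ (2 : ℝ) ∂m) ^ (1 / 2 : ℝ) * (∫⁻ x in J, 1 ^ (2 : ℝ) ∂m) ^ (1 / 2 : ℝ) :=
    ENNReal.lintegral_mul_le_Lp_mul_Lq _ .two_two (measurable_rnDeriv ν m).aemeasurable
      aemeasurable_const
  simp only [mul_one, one_pow, setLIntegral_one, ENNReal.rpow_two] at hCS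
  calc ν univ ^ 2 ≤ ((∫⁻ x in J, g x ^ 2 ∂m) ^ (1 / 2 : ℝ) * m J ^ (1 / 2 : ℝ)) ^ 2 := by
        rw [hνJ']; gcongr
    _ = m J * ∫⁻ x in J, g x ^ 2 ∂m := by
        rw [mul_pow, ← ENNReal.rpow_natCast, ← ENNReal.rpow_natCast, ← ENNReal.rpow_mul,
          ← ENNReal.rpow_mul]
        norm_num [mul_comm]
    _ ≤ m J * ∫⁻ x, g x ^ 2 ∂m := by gcongr; exact restrict_le_self

theorem lintegral_rnDeriv_sq {ν m : Measure α} [SigmaFinite ν] [SigmaFinite m]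
    (hν : ν ≪ m) : ∫⁻ x, ν.rnDeriv m x ^ 2 ∂m = ∫⁻ x, ν.rnDeriv m x ∂ν := by
  simp only [sq, lintegral_rnDeriv_mul hν (measurable_rnDeriv ν m).aemeasurable]

end MeasureTheory.Measure

theorem ENNReal.mul_le_of_sq_le_mul {K a s b : ℝ≥0∞} (hs : s ≠ ⊤) (hK : K * s ≤ a)
    (hsq : a ^ 2 ≤ s * b) : K * a ≤ b := by
  rcases eq_or_ne s 0 with rfl | hs0
  · simp_all
  refine (ENNReal.mul_le_mul_iff_left hs0 hs).1 ?_
  calc K * a * s = K * s * a := by ring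
    _ ≤ a * a := by gcongr
    _ ≤ b * s := by rw [← sq, mul_comm b]; exact hsq

section LipschitzProjection

variable {X : Type*} [PseudoMetricSpace X] [MeasurableSpace X] [BorelSpace X] {μ : Measure X}
  [IsFiniteMeasure μ] {p : X → ℝ}

theorem measure_sq_le_setLIntegral_rnDeriv_map (hp : LipschitzWith 1 p)
    (hac : μ.map p ≪ volume) {G : Set X} (hG : MeasurableSet G) {x : X} {r : ℝ}
    (hGr : G ⊆ closedBall x r) :
    μ G ^ 2 ≤ ENNReal.ofReal (2 * r) * ∫⁻ z in G, (μ.map p).rnDeriv volume (p z) ∂μ := by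
  have hpm : Measurable p := hp.continuous.measurable
  set f := (μ.map p).rnDeriv volume
  set ν := (μ.restrict G).map p
  have hνle : ν ≤ μ.map p := map_mono restrict_le_self hpm
  have hνac : ν ≪ volume := (absolutelyContinuous_of_le hνle).trans hac
  have hνJ : ν (closedBall (p x) r)ᶜ = 0 := by
    rw [map_apply hpm measurableSet_closedBall.compl, restrict_apply' hG]
    refine measure_mono_null (fun z ⟨hzJ, hzG⟩ => hzJ ?_) measure_empty
    have hz := hp.dist_le_mul z x
    rw [NNReal.coe_one, one_mul] at hz
    exact hz.trans (hGr hzG)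
  have hνuniv : ν univ = μ G := by
    rw [map_apply hpm .univ, preimage_univ, restrict_apply_univ]
  calc μ G ^ 2 = ν univ ^ 2 := by rw [hνuniv]
    _ ≤ volume (closedBall (p x) r) * ∫⁻ t, ν.rnDeriv volume t ^ 2 :=
        measure_univ_sq_le_mul_lintegral_rnDeriv_sq hνac measurableSet_closedBall hνJ
    _ ≤ ENNReal.ofReal (2 * r) * ∫⁻ t, ν.rnDeriv volume t * f t := by
        simp only [Real.volume_closedBall, sq]
        gcongr 1
        refine lintegral_mono_ae ?_
        filter_upwards [rnDeriv_le_rnDeriv_of_le volume hνle] with t ht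
        gcongr
    _ = ENNReal.ofReal (2 * r) * ∫⁻ z in G, f (p z) ∂μ := by
        rw [lintegral_rnDeriv_mul hνac (measurable_rnDeriv _ _).aemeasurable,
          lintegral_map (measurable_rnDeriv _ _) hpm]

theorem mul_tsum_measure_le_lintegral_rnDeriv_map (hp : LipschitzWith 1 p)
    (hac : μ.map p ≪ volume) {K : ℝ≥0∞} {G : ℕ → Set X} (hGm : ∀ n, MeasurableSet (G n))
    (hdisj : Pairwise (Function.onFun Disjoint G))
    (hG : ∀ n, G n = ∅ ∨ ∃ q : X × ℝ, G n ⊆ closedBall q.1 q.2 ∧ K * ENNReal.ofReal q.2 ≤ μ (G n)) :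
    K * ∑' n, μ (G n) ≤ 2 * ∫⁻ z, (μ.map p).rnDeriv volume (p z) ∂μ := by
  set f := (μ.map p).rnDeriv volume
  have hpiece : ∀ n, K * μ (G n) ≤ 2 * ∫⁻ z in G n, f (p z) ∂μ := by
    intro n
    rcases hG n with h | ⟨⟨x, r⟩, hGr, hK⟩
    · simp [h]
    refine ENNReal.mul_le_of_sq_le_mul ENNReal.ofReal_ne_top hK ?_
    calc μ (G n) ^ 2 ≤ ENNReal.ofReal (2 * r) * ∫⁻ z in G n, f (p z) ∂μ :=
          measure_sq_le_setLIntegral_rnDeriv_map hp hac (hGm n) hGr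
      _ = ENNReal.ofReal r * (2 * ∫⁻ z in G n, f (p z) ∂μ) := by
          rw [ENNReal.ofReal_mul zero_le_two, ENNReal.ofReal_ofNat]; ring
  calc K * ∑' n, μ (G n) = ∑' n, K * μ (G n) := ENNReal.tsum_mul_left.symm
    _ ≤ ∑' n, 2 * ∫⁻ z in G n, f (p z) ∂μ := ENNReal.tsum_le_tsum hpiece
    _ = 2 * ∫⁻ z in ⋃ n, G n, f (p z) ∂μ := by
        rw [ENNReal.tsum_mul_left, lintegral_iUnion hGm hdisj]
    _ ≤ 2 * ∫⁻ z, f (p z) ∂μ := by gcongr; exact restrict_le_self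

end LipschitzProjection

namespace GreedyRemoval

variable {α ι : Type*} [MeasurableSpace α] (μ : Measure α) [IsFiniteMeasure μ]
  (B : ι → Set α) (w : ι → ℝ≥0∞)

def IsHeavy (S : Set α) (i : ι) : Prop := w i < μ (S ∩ B i)

theorem exists_isHeavy_forall_le_two_mul {S : Set α} (h : ∃ i, IsHeavy μ B w S i) :
    ∃ i, IsHeavy μ B w S i ∧ ∀ j, IsHeavy μ B w S j → μ (S ∩ B j) ≤ 2 * μ (S ∩ B i) := by
  set A := ⨆ j : {j // IsHeavy μ B w S j}, μ (S ∩ B j)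
  have hle : ∀ j, IsHeavy μ B w S j → μ (S ∩ B j) ≤ A := fun j hj =>
    le_iSup (fun j : {j // IsHeavy μ B w S j} => μ (S ∩ B j)) ⟨j, hj⟩
  have hA0 : A ≠ 0 := by
    obtain ⟨j, hj⟩ := h
    exact (pos_of_gt (hj.trans_le (hle j hj))).ne'
  have hAtop : A ≠ ⊤ := ne_top_of_le_ne_top (measure_ne_top μ univ)
    (iSup_le fun _ => measure_mono (subset_univ _))
  obtain ⟨⟨i, hi⟩, hAi⟩ := lt_iSup_iff.1 (ENNReal.half_lt_self hA0 hAtop)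
  refine ⟨i, hi, fun j hj => (hle j hj).trans ?_⟩
  calc A = 2 * (A / 2) := (ENNReal.mul_div_cancel two_ne_zero ENNReal.ofNat_ne_top).symm
    _ ≤ 2 * μ (S ∩ B i) := by gcongr

noncomputable def heavyPart (S : Set α) : Set α :=
  if h : ∃ i, IsHeavy μ B w S i then S ∩ B (exists_isHeavy_forall_le_two_mul μ B w h).choose
  else ∅

noncomputable def remaining (E : Set α) : ℕ → Set α
  | 0 => E
  | n + 1 => remaining E n \ heavyPart μ B w (remaining E n)

variable {μ B w}

theorem heavyPart_subset (S : Set α) : heavyPart μ B w S ⊆ S := by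
  unfold heavyPart; split_ifs
  exacts [inter_subset_left, empty_subset S]

theorem measurableSet_heavyPart (hB : ∀ i, MeasurableSet (B i)) {S : Set α}
    (hS : MeasurableSet S) : MeasurableSet (heavyPart μ B w S) := by
  unfold heavyPart; split_ifs
  exacts [hS.inter (hB _), .empty]

theorem heavyPart_eq_empty_or (S : Set α) : heavyPart μ B w S = ∅ ∨
    ∃ i, heavyPart μ B w S ⊆ B i ∧ w i ≤ μ (heavyPart μ B w S) := by
  unfold heavyPart; split_ifs with h
  · exact .inr ⟨_, inter_subset_right, (exists_isHeavy_forall_le_two_mul μ B w h).choose_spec.1.le⟩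
  · exact .inl rfl

theorem measure_inter_le_two_mul_heavyPart {S : Set α} {j : ι} (hj : IsHeavy μ B w S j) :
    μ (S ∩ B j) ≤ 2 * μ (heavyPart μ B w S) := by
  have h : ∃ i, IsHeavy μ B w S i := ⟨j, hj⟩
  rw [heavyPart, dif_pos h]
  exact (exists_isHeavy_forall_le_two_mul μ B w h).choose_spec.2 j hj

variable {E : Set α}

theorem remaining_antitone : Antitone (remaining μ B w E) :=
  antitone_nat_of_succ_le fun _ => sdiff_subset

theorem measurableSet_remaining (hB : ∀ i, MeasurableSet (B i)) (hE : MeasurableSet E) (n : ℕ) :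
    MeasurableSet (remaining μ B w E n) := by
  induction n with
  | zero => exact hE
  | succ n ih => exact ih.diff (measurableSet_heavyPart hB ih)

theorem pairwise_disjoint_heavyPart_remaining :
    Pairwise (Function.onFun Disjoint fun n => heavyPart μ B w (remaining μ B w E n)) := by
  refine (pairwise_disjoint_on _).2 fun m n hmn => disjoint_left.2 fun z hzm hzn => ?_
  have : z ∈ remaining μ B w E (m + 1) := remaining_antitone hmn (heavyPart_subset _ hzn)
  exact this.2 hzm

theorem subset_iInter_remaining_union :
    E ⊆ (⋂ n, remaining μ B w E n) ∪ ⋃ n, heavyPart μ B w (remaining μ B w E n) := by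
  intro z hz
  by_cases h : ∃ n, z ∉ remaining μ B w E n
  · right
    obtain ⟨n, hn⟩ : ∃ n, Nat.find h = n + 1 :=
      Nat.exists_eq_succ_of_ne_zero fun h0 => Nat.find_spec h (h0 ▸ hz)
    have hzn : z ∈ remaining μ B w E n := by_contra (Nat.find_min h (by omega))
    have hzn' : z ∉ remaining μ B w E (n + 1) := hn ▸ Nat.find_spec h
    exact mem_iUnion.2 ⟨n, by_contra fun hz' => hzn' ⟨hzn, hz'⟩⟩
  · exact .inl (mem_iInter.2 fun n => not_not.1 (not_exists.1 h n))

theorem measure_iInter_remaining_inter_le (hB : ∀ i, MeasurableSet (B i))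
    (hE : MeasurableSet E) (i : ι) : μ ((⋂ n, remaining μ B w E n) ∩ B i) ≤ w i := by
  by_contra! hi
  set G := fun n => heavyPart μ B w (remaining μ B w E n)
  have hsum : ∑' n, μ (G n) ≠ ⊤ := by
    rw [← measure_iUnion pairwise_disjoint_heavyPart_remaining
      fun n => measurableSet_heavyPart hB (measurableSet_remaining hB hE n)]
    exact measure_ne_top μ _
  -- a heavy ball for the limit set stays heavy at every stage, but the removed masses tend to 0
  have hle : ∀ n, μ ((⋂ n, remaining μ B w E n) ∩ B i) ≤ 2 * μ (G n) := fun n =>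
    have hsub := inter_subset_inter_left (B i) (iInter_subset (remaining μ B w E) n)
    (measure_mono hsub).trans
      (measure_inter_le_two_mul_heavyPart (hi.trans_le (measure_mono hsub)))
  have hlim : Tendsto (fun n => 2 * μ (G n)) atTop (𝓝 0) := by
    simpa using ENNReal.Tendsto.const_mul (ENNReal.tendsto_atTop_zero_of_tsum_ne_top hsum)
      (.inr ENNReal.ofNat_ne_top)
  exact (pos_of_gt hi).ne' (nonpos_iff_eq_zero.1 (ge_of_tendsto' hlim hle))

end GreedyRemoval

open GreedyRemoval in
theorem exists_subset_forall_measure_inter_le {α ι : Type*} [MeasurableSpace α] (μ : Measure α)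
    [IsFiniteMeasure μ] {B : ι → Set α} (w : ι → ℝ≥0∞) (hB : ∀ i, MeasurableSet (B i))
    {E : Set α} (hE : MeasurableSet E) :
    ∃ F ⊆ E, MeasurableSet F ∧ (∀ i, μ (F ∩ B i) ≤ w i) ∧
      ∃ G : ℕ → Set α, E ⊆ F ∪ ⋃ n, G n ∧ (∀ n, MeasurableSet (G n)) ∧
        Pairwise (Function.onFun Disjoint G) ∧ ∀ n, G n = ∅ ∨ ∃ i, G n ⊆ B i ∧ w i ≤ μ (G n) :=
  ⟨⋂ n, remaining μ B w E n, iInter_subset _ 0, .iInter (measurableSet_remaining hB hE),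
    measure_iInter_remaining_inter_le hB hE, fun n => heavyPart μ B w (remaining μ B w E n),
    subset_iInter_remaining_union,
    fun n => measurableSet_heavyPart hB (measurableSet_remaining hB hE n),
    pairwise_disjoint_heavyPart_remaining, fun _ => heavyPart_eq_empty_or _⟩

theorem lipschitzWith_projCoord_s16 (θ : ℝ) : LipschitzWith 1 (projCoord θ) := by
  refine LipschitzWith.of_dist_le_mul fun z w => ?_
  have hunit : ‖Complex.exp (-(θ : ℂ) * Complex.I)‖ = 1 := by
    rw [← Complex.ofReal_neg, Complex.norm_exp_ofReal_mul_I]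
  calc dist (projCoord θ z) (projCoord θ w)
      = |((z - w) * Complex.exp (-(θ : ℂ) * Complex.I)).re| := by
        rw [Real.dist_eq, projCoord, projCoord, ← Complex.sub_re, ← sub_mul]
    _ ≤ ‖(z - w) * Complex.exp (-(θ : ℂ) * Complex.I)‖ := Complex.abs_re_le_norm _
    _ = 1 * dist z w := by rw [norm_mul, hunit, mul_one, one_mul, dist_eq_norm]

theorem measurable_projCoord (θ : ℝ) : Measurable (projCoord θ) :=
  (lipschitzWith_projCoord_s16 θ).continuous.measurable

theorem projL2sq_eq_lintegral {θ : ℝ} {μ : Measure ℂ} [IsFiniteMeasure μ]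
    (hac : μ.map (projCoord θ) ≪ volume) :
    projL2sq θ μ = ∫⁻ z, (μ.map (projCoord θ)).rnDeriv volume (projCoord θ z) ∂μ := by
  rw [projL2sq, dif_pos hac, lintegral_rnDeriv_sq hac,
    lintegral_map (measurable_rnDeriv _ _) (measurable_projCoord θ)]

theorem projL2sq_of_not_absolutelyContinuous {θ : ℝ} {μ : Measure ℂ}
    (h : ¬μ.map (projCoord θ) ≪ volume) : projL2sq θ μ = ⊤ :=
  dif_neg h

theorem projL2sq_zero (θ : ℝ) : projL2sq θ 0 = 0 := by
  have hac : (0 : Measure ℂ).map (projCoord θ) ≪ volume := by simp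
  simp [projL2sq_eq_lintegral hac]

theorem projL2sq_mono {θ : ℝ} {ν μ : Measure ℂ} [IsFiniteMeasure μ] (h : ν ≤ μ) :
    projL2sq θ ν ≤ projL2sq θ μ := by
  by_cases hac : μ.map (projCoord θ) ≪ volume
  · have hle : ν.map (projCoord θ) ≤ μ.map (projCoord θ) := map_mono h (measurable_projCoord θ)
    have hacν := (absolutelyContinuous_of_le hle).trans hac
    rw [projL2sq, projL2sq, dif_pos hacν, dif_pos hac]
    refine lintegral_mono_ae ?_
    filter_upwards [rnDeriv_le_rnDeriv_of_le volume hle] with t ht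
    gcongr
  · exact (projL2sq_of_not_absolutelyContinuous hac).symm ▸ le_top

theorem projL2sq_smul (θ : ℝ) (ν : Measure ℂ) [IsFiniteMeasure ν] {c : ℝ≥0∞} (hc₀ : c ≠ 0)
    (hc : c ≠ ⊤) : projL2sq θ (c • ν) = c ^ 2 * projL2sq θ ν := by
  have hmap : (c • ν).map (projCoord θ) = c • ν.map (projCoord θ) := Measure.map_smul c ν _
  have hac : (c • ν).map (projCoord θ) ≪ volume ↔ ν.map (projCoord θ) ≪ volume := by
    rw [hmap]
    exact ⟨fun h => (absolutelyContinuous_smul hc₀).trans h, fun h => h.smul_left c⟩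
  by_cases hν : ν.map (projCoord θ) ≪ volume
  · rw [projL2sq, projL2sq, dif_pos (hac.2 hν), dif_pos hν, hmap,
      ← lintegral_const_mul' _ _ (by finiteness)]
    refine lintegral_congr_ae ?_
    filter_upwards [rnDeriv_smul_left_of_ne_top (ν.map (projCoord θ)) volume hc] with t ht
    rw [ht, Pi.smul_apply, smul_eq_mul, mul_pow]
  · rw [projL2sq_of_not_absolutelyContinuous hν, projL2sq_of_not_absolutelyContinuous (mt hac.1 hν),
      ENNReal.mul_top (pow_ne_zero 2 hc₀)]

theorem exists_subset_measure_inter_closedBall_le (μ : Measure ℂ) [IsFiniteMeasure μ] {E : Set ℂ}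
    (hE : MeasurableSet E) (K : ℝ≥0∞) :
    ∃ F ⊆ E, MeasurableSet F ∧ (∀ x r, μ (F ∩ closedBall x r) ≤ K * ENNReal.ofReal r) ∧
      ∀ θ, K * μ (E \ F) ≤ 2 * projL2sq θ μ := by
  obtain ⟨F, hFE, hF, hgrowth, G, hEG, hGm, hdisj, hG⟩ :=
    exists_subset_forall_measure_inter_le μ (B := fun q : ℂ × ℝ => closedBall q.1 q.2)
      (fun q => K * ENNReal.ofReal q.2) (fun _ => measurableSet_closedBall) hE
  refine ⟨F, hFE, hF, fun x r => hgrowth (x, r), fun θ => ?_⟩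
  by_cases hac : μ.map (projCoord θ) ≪ volume
  · calc K * μ (E \ F) ≤ K * ∑' n, μ (G n) := by
          gcongr
          exact (measure_mono (sdiff_subset_iff.2 hEG)).trans (measure_iUnion_le G)
      _ ≤ 2 * ∫⁻ z, (μ.map (projCoord θ)).rnDeriv volume (projCoord θ z) ∂μ :=
          mul_tsum_measure_le_lintegral_rnDeriv_map (lipschitzWith_projCoord_s16 θ) hac hGm hdisj hG
      _ = 2 * projL2sq θ μ := by rw [projL2sq_eq_lintegral hac]
  · simp [projL2sq_of_not_absolutelyContinuous hac]

theorem exists_isCompact_subset_measure_inter_closedBall_le (μ : Measure ℂ) [IsFiniteMeasure μ]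
    {E : Set ℂ} (hE : IsCompact E) {I : Set ℝ} {K : ℝ≥0∞}
    (hKI₀ : K * volume I ≠ 0) (hKI : K * volume I ≠ ⊤)
    (hK : 4 * ∫⁻ θ in I, projL2sq θ μ ≤ K * volume I * μ E) :
    ∃ F, IsCompact F ∧ F ⊆ E ∧ (∀ x r, μ (F ∩ closedBall x r) ≤ K * ENNReal.ofReal r) ∧
      μ E ≤ 4 * μ F := by
  obtain ⟨F₀, hF₀E, hF₀, hgrowth, hrem⟩ :=
    exists_subset_measure_inter_closedBall_le μ hE.measurableSet K
  have hrem₂ : 2 * μ (E \ F₀) ≤ μ E := by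
    refine (ENNReal.mul_le_mul_iff_right hKI₀ hKI).1 ?_
    calc K * volume I * (2 * μ (E \ F₀)) = 2 * ∫⁻ _ in I, K * μ (E \ F₀) := by
          rw [setLIntegral_const]; ring
      _ ≤ 2 * ∫⁻ θ in I, 2 * projL2sq θ μ := by gcongr 2 * ?_; exact lintegral_mono hrem
      _ = 4 * ∫⁻ θ in I, projL2sq θ μ := by
          rw [lintegral_const_mul' _ _ ENNReal.ofNat_ne_top, ← mul_assoc]; norm_num
      _ ≤ K * volume I * μ E := hK
  have hsplit : μ E = μ F₀ + μ (E \ F₀) := by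
    rw [← measure_inter_add_sdiff E hF₀, inter_eq_right.2 hF₀E]
  have hF₀mass : μ E ≤ 2 * μ F₀ := by
    rw [two_mul, hsplit] at hrem₂ ⊢
    exact add_le_add_right ((ENNReal.add_le_add_iff_right (measure_ne_top _ _)).1 hrem₂) _
  rcases eq_or_ne (μ F₀) 0 with hF₀0 | hF₀0
  · refine ⟨∅, isCompact_empty, empty_subset E, by simp, ?_⟩
    simpa [hF₀0] using hF₀mass
  obtain ⟨F, hFF₀, hF, hFmass⟩ :=
    hF₀.exists_lt_isCompact (ENNReal.half_lt_self hF₀0 (measure_ne_top μ F₀))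
  have hF₀F : μ F₀ ≤ 2 * μ F := by
    rw [mul_comm]
    exact (ENNReal.div_le_iff_le_mul (.inl two_ne_zero) (.inl ENNReal.ofNat_ne_top)).1 hFmass.le
  refine ⟨F, hF, hFF₀.trans hF₀E, fun x r => (measure_mono (by gcongr)).trans (hgrowth x r), ?_⟩
  calc μ E ≤ 2 * (2 * μ F) := hF₀mass.trans (by gcongr)
    _ = 4 * μ F := by rw [← mul_assoc]; norm_num

theorem exists_isCompact_subset_smul_restrict_ball_le (μ : Measure ℂ) [IsFiniteMeasure μ]
    {E : Set ℂ} (hE : IsCompact E) {I : Set ℝ} {c lam : ℝ≥0∞} (hc₀ : c ≠ 0) (hc : c ≠ ⊤)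
    (hlam₀ : lam ≠ 0) (hlam : lam ≠ ⊤) (hcI : c * (4 * lam) = volume I)
    (hT : ∫⁻ θ in I, projL2sq θ μ = lam * μ E) :
    ∃ F, IsCompact F ∧ F ⊆ E ∧ (∀ x r, (c • μ.restrict F) (ball x r) ≤ ENNReal.ofReal r) ∧
      c / 4 * μ E ≤ (c • μ.restrict F) F ∧
      ∫⁻ θ in I, projL2sq θ (c • μ.restrict F) ≤ volume I * (c • μ.restrict F) F := by
  have hKI : c⁻¹ * volume I = 4 * lam := by
    rw [← hcI, ← mul_assoc, ENNReal.inv_mul_cancel hc₀ hc, one_mul]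
  obtain ⟨F, hF, hFE, hgrowth, hFmass⟩ :=
    exists_isCompact_subset_measure_inter_closedBall_le μ hE (K := c⁻¹) (I := I)
      (hKI ▸ mul_ne_zero four_ne_zero hlam₀) (hKI ▸ ENNReal.mul_ne_top ENNReal.ofNat_ne_top hlam)
      (by rw [hKI, hT, mul_assoc])
  refine ⟨F, hF, hFE, fun x r => ?_, ?_, ?_⟩ <;>
    simp only [Measure.smul_apply, smul_eq_mul, restrict_apply_self,
      Measure.restrict_apply measurableSet_ball]
  · calc c * μ (ball x r ∩ F) ≤ c * (c⁻¹ * ENNReal.ofReal r) := by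
          gcongr
          refine (measure_mono ?_).trans (hgrowth x r)
          exact inter_comm (ball x r) F ▸ inter_subset_inter_right F ball_subset_closedBall
      _ = ENNReal.ofReal r := by rw [← mul_assoc, ENNReal.mul_inv_cancel hc₀ hc, one_mul]
  · calc c / 4 * μ E ≤ c / 4 * (4 * μ F) := by gcongr
      _ = c * μ F := by rw [← mul_assoc, ENNReal.div_mul_cancel four_ne_zero ENNReal.ofNat_ne_top]
  · calc ∫⁻ θ in I, projL2sq θ (c • μ.restrict F)
        = c ^ 2 * ∫⁻ θ in I, projL2sq θ (μ.restrict F) := by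
          simp_rw [projL2sq_smul _ _ hc₀ hc]
          exact lintegral_const_mul' _ _ (ENNReal.pow_ne_top hc)
      _ ≤ c ^ 2 * (lam * μ E) := by
          rw [← hT]; gcongr; exact projL2sq_mono restrict_le_self
      _ ≤ c ^ 2 * (lam * (4 * μ F)) := by gcongr
      _ = volume I * (c * μ F) := by rw [← hcI]; ring

theorem statement16_general (E : Set ℂ) (hE : IsCompact E)
    (I : Set ℝ) (hIsub : I ⊆ Set.Ico 0 π)
    (μ : Measure ℂ) [IsFiniteMeasure μ]
    (hpos : 0 < ∫⁻ θ in I, projL2sq θ μ) :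
    ∃ F : Set ℂ, IsCompact F ∧ F ⊆ E ∧
      (∀ x : ℂ, ∀ r : ℝ, 0 < r →
        (((μH[1] : Measure ℝ) I / (4 * ((∫⁻ θ in I, projL2sq θ μ) / μ E))) • μ.restrict F)
          (Metric.ball x r) ≤ ENNReal.ofReal r) ∧
      ((μH[1] : Measure ℝ) I / (16 * ((∫⁻ θ in I, projL2sq θ μ) / μ E))) * μ E
        ≤ (((μH[1] : Measure ℝ) I / (4 * ((∫⁻ θ in I, projL2sq θ μ) / μ E))) • μ.restrict F) F ∧
      (∫⁻ θ in I, projL2sq θ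
          (((μH[1] : Measure ℝ) I / (4 * ((∫⁻ θ in I, projL2sq θ μ) / μ E))) • μ.restrict F))
        ≤ (μH[1] : Measure ℝ) I *
          (((μH[1] : Measure ℝ) I / (4 * ((∫⁻ θ in I, projL2sq θ μ) / μ E))) • μ.restrict F) F := by
  rw [hausdorffMeasure_real]
  set T := ∫⁻ θ in I, projL2sq θ μ
  set lam := T / μ E
  set c := volume I / (4 * lam)
  have h16 : volume I / (16 * lam) = c / 4 := by
    rw [show (16 : ℝ≥0∞) * lam = 4 * lam * 4 by ring, div_eq_mul_inv,
      ENNReal.mul_inv (.inr ENNReal.ofNat_ne_top) (.inr four_ne_zero), ← mul_assoc,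
      ← div_eq_mul_inv, ← div_eq_mul_inv]
  rw [h16]
  rcases eq_or_ne c 0 with hc₀ | hc₀
  · exact ⟨∅, isCompact_empty, empty_subset E, by simp [hc₀, projL2sq_zero]⟩
  have hlam : lam ≠ ⊤ := fun h => hc₀ (ENNReal.div_eq_zero_iff.2 (.inr (by simp [h])))
  have hE₀ : μ E ≠ 0 := fun h => hlam (by simp only [lam, h, ENNReal.div_zero hpos.ne'])
  have hlam₀ : lam ≠ 0 := by simp [lam, hpos.ne']
  have hI : volume I ≠ ⊤ := ne_top_of_le_ne_top (by simp [Real.volume_Ico]) (measure_mono hIsub)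
  obtain ⟨F, hF, hFE, hgrowth, hmass, hL2⟩ := exists_isCompact_subset_smul_restrict_ball_le μ hE
    hc₀ (ENNReal.div_ne_top hI (mul_ne_zero four_ne_zero hlam₀)) hlam₀ hlam
    (ENNReal.div_mul_cancel (mul_ne_zero four_ne_zero hlam₀)
      (ENNReal.mul_ne_top ENNReal.ofNat_ne_top hlam))
    (ENNReal.div_mul_cancel hE₀ (measure_ne_top μ E)).symm
  exact ⟨F, hF, hFE, fun x r _ => hgrowth x r, hmass, hL2⟩

/-- Let `E ⊆ ℂ` be compact, `I ⊆ [0,π)` an interval with `ℋ¹(I) > 0`, and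
`μ` a finite Borel measure on `E` with `0 < ∫_I ‖P_θ μ‖₂² dθ < ∞`. With
`λ = (∫_I ‖P_θ μ‖₂² dθ)/μ(E)`, there is a compact `F ⊆ E` so that
`σ = (ℋ¹(I)/(4λ))·μ|_F` has linear growth with constant 1, `σ(F) ≥ (ℋ¹(I)/(16λ)) μ(E)`, and
`∫_I ‖P_θ σ‖₂² dθ ≤ ℋ¹(I)·σ(F)`. -/
theorem statement16 (E : Set ℂ) (hE : IsCompact E)
    (I : Set ℝ) (hIconn : I.OrdConnected) (hIsub : I ⊆ Set.Ico 0 π)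
    (hIpos : 0 < (μH[1] : Measure ℝ) I)
    (μ : Measure ℂ) [IsFiniteMeasure μ] (hsupp : μ Eᶜ = 0)
    (hpos : 0 < ∫⁻ θ in I, projL2sq θ μ) (hfin : (∫⁻ θ in I, projL2sq θ μ) < ⊤) :
    ∃ F : Set ℂ, IsCompact F ∧ F ⊆ E ∧
      (∀ x : ℂ, ∀ r : ℝ, 0 < r →
        (((μH[1] : Measure ℝ) I / (4 * ((∫⁻ θ in I, projL2sq θ μ) / μ E))) • μ.restrict F)
          (Metric.ball x r) ≤ ENNReal.ofReal r) ∧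
      ((μH[1] : Measure ℝ) I / (16 * ((∫⁻ θ in I, projL2sq θ μ) / μ E))) * μ E
        ≤ (((μH[1] : Measure ℝ) I / (4 * ((∫⁻ θ in I, projL2sq θ μ) / μ E))) • μ.restrict F) F ∧
      (∫⁻ θ in I, projL2sq θ
          (((μH[1] : Measure ℝ) I / (4 * ((∫⁻ θ in I, projL2sq θ μ) / μ E))) • μ.restrict F))
        ≤ (μH[1] : Measure ℝ) I *
          (((μH[1] : Measure ℝ) I / (4 * ((∫⁻ θ in I, projL2sq θ μ) / μ E))) • μ.restrict F) F :=
  statement16_general E hE I hIsub μ hpos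
end

section
/- Let 0 < n < d be integers, W ∈ G(d, d−n), and t > 0. There exists A₀ > 10, depending only on d, n, and t, such that the following holds for all A ≥ A₀ and all ε > 0. Let ψ_ε : ℝ^d → [0,∞) be supported in B(0, 2ε) with ∫ψ_ε = 1, and let f_F(y) = χ_{K(W,t)}(y) · χ_{{|y| > Aε}}(y) · |y|^{−n}. Then for every x ∈ ℝ^d, (f_F * ψ_ε)(x) ≤ 2 · χ_{K(W, 2t)}(x) · |x|^{−n}. -/
open MeasureTheory Measure Set Filter Metric
open scoped ENNReal Real Topology Classical

/-- The cone `K(V,t) = {x : dist(x,V) < t|x|}` around a subset `V` of a normed space. -/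
def coneK {E : Type*} [NormedAddCommGroup E] (V : Set E) (t : ℝ) : Set E :=
  {x | Metric.infDist x V < t * ‖x‖}

/-!
A point `y` of the support of `ψ_ε` has `|y| < 2ε`, while `x - y` in the support of `f_F` has
`|x - y| > Aε`. For `A` large, `y` is therefore a small perturbation of `x - y`: moving by `y`
changes the distance to `W` by at most `|y|`, which keeps `x` in the wider cone `K(W, 2t)`, and
`|x| ≤ (1 + 1/(2n)) |x - y|` with `(1 + 1/(2n))ⁿ ≤ √e ≤ 2`. Hence `f_F(x - y) ≤ 2 χ_{K(W,2t)}(x) |x|⁻ⁿ`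
on the support of `ψ_ε`, and integrating against the probability density `ψ_ε` gives the claim.
-/

lemma one_add_inv_two_mul_pow_le_two (n : ℕ) : (1 + 1 / (2 * n : ℝ)) ^ n ≤ 2 := by
  have h_exp : (1 + 1 / (2 * n : ℝ)) ^ n ≤ Real.exp (1 / 2) := by
    have hn : (-1 / 2 : ℝ) ≤ n := by linarith [(n.cast_nonneg : (0 : ℝ) ≤ n)]
    convert Real.one_sub_div_pow_le_exp_neg hn using 2 <;> ring
  have h_half : 1 / 2 ≤ Real.exp (-(1 / 2)) := by
    linarith [Real.one_sub_le_exp_neg (1 / 2 : ℝ)]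
  calc (1 + 1 / (2 * n : ℝ)) ^ n ≤ Real.exp (1 / 2) := h_exp
    _ = (Real.exp (-(1 / 2)))⁻¹ := by rw [Real.exp_neg, inv_inv]
    _ ≤ 2 := by rw [inv_le_comm₀ (Real.exp_pos _) two_pos]; linarith

lemma inv_pow_le_two_mul_inv_pow {a b : ℝ} (n : ℕ) (ha : 0 < a) (hb : 0 < b)
    (hba : b ≤ (1 + 1 / (2 * n : ℝ)) * a) : (a ^ n)⁻¹ ≤ 2 * (b ^ n)⁻¹ := by
  have hpow : b ^ n ≤ 2 * a ^ n :=
    calc b ^ n ≤ ((1 + 1 / (2 * n : ℝ)) * a) ^ n := pow_le_pow_left₀ hb.le hba n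
      _ = (1 + 1 / (2 * n : ℝ)) ^ n * a ^ n := mul_pow _ _ _
      _ ≤ 2 * a ^ n := by gcongr; exact one_add_inv_two_mul_pow_le_two n
  rw [← div_eq_mul_inv, inv_le_comm₀ (by positivity) (by positivity), inv_div,
    div_le_iff₀ two_pos]
  linarith

section Cone

variable {E : Type*} [NormedAddCommGroup E]

lemma norm_pos_of_mem_coneK {V : Set E} {t : ℝ} {x : E} (hx : x ∈ coneK V t) : 0 < ‖x‖ := by
  by_contra! h
  have hx0 : x = 0 := norm_le_zero_iff.mp h
  have : infDist x V < t * ‖x‖ := hx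
  simp only [hx0, norm_zero, mul_zero] at this
  exact this.not_ge infDist_nonneg

lemma mem_coneK_two_mul_of_sub_mem {V : Set E} {t : ℝ} (ht : 0 ≤ t) {x y : E}
    (hxy : x - y ∈ coneK V t) (hy : (t + 1) * ‖y‖ ≤ t * ‖x‖) : x ∈ coneK V (2 * t) := by
  have hxy' : infDist (x - y) V < t * ‖x - y‖ := hxy
  have h_lip : infDist x V ≤ infDist (x - y) V + ‖y‖ := by
    simpa [dist_eq_norm] using infDist_le_infDist_add_dist (x := x) (y := x - y) (s := V)
  have h_tri : t * ‖x - y‖ ≤ t * ‖x‖ + t * ‖y‖ := by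
    rw [← mul_add]; exact mul_le_mul_of_nonneg_left (norm_sub_le x y) ht
  show infDist x V < 2 * t * ‖x‖
  linarith

lemma indicator_coneK_sub_le {V : Set E} {n : ℕ} {t A ε : ℝ} (hn : 0 < n) (ht : 0 < t)
    (hε : 0 < ε) (hA_n : 4 * n ≤ A) (hA_t : 4 + 2 / t ≤ A) {x y : E} (hy : ‖y‖ < 2 * ε) :
    (coneK V t ∩ {z | A * ε < ‖z‖}).indicator (fun z => (‖z‖ ^ n)⁻¹) (x - y) ≤
      2 * (coneK V (2 * t)).indicator (fun z => (‖z‖ ^ n)⁻¹) x := by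
  by_cases hS : x - y ∈ coneK V t ∩ {z | A * ε < ‖z‖}
  swap
  · rw [indicator_of_notMem hS]
    exact mul_nonneg zero_le_two (indicator_nonneg (fun z _ => by positivity) x)
  have h_cone : x - y ∈ coneK V t := hS.1
  have h_far : A * ε < ‖x - y‖ := hS.2
  have h_tri : ‖x‖ ≤ ‖x - y‖ + ‖y‖ := norm_le_norm_sub_add x y
  have hx_far : (A - 2) * ε < ‖x‖ := by linarith [norm_sub_le x y]
  have hx_cone : x ∈ coneK V (2 * t) := by
    refine mem_coneK_two_mul_of_sub_mem ht.le h_cone ?_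
    calc (t + 1) * ‖y‖ ≤ (t + 1) * (2 * ε) := by gcongr
      _ = t * ((4 + 2 / t - 2) * ε) := by field_simp; ring
      _ ≤ t * ((A - 2) * ε) := by gcongr
      _ ≤ t * ‖x‖ := by gcongr
  have h_close : ‖x‖ ≤ (1 + 1 / (2 * n : ℝ)) * ‖x - y‖ := by
    have hn' : (0 : ℝ) < n := by exact_mod_cast hn
    have hy_small : ‖y‖ ≤ ‖x - y‖ / (2 * n) := by rw [le_div_iff₀ (by positivity)]; nlinarith
    rw [add_mul, one_mul, div_mul_eq_mul_div, one_mul]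
    linarith
  rw [indicator_of_mem hS, indicator_of_mem hx_cone]
  exact inv_pow_le_two_mul_inv_pow n (norm_pos_of_mem_coneK h_cone)
    (norm_pos_of_mem_coneK hx_cone) h_close

end Cone

lemma integral_mul_le_of_le_on_support {α : Type*} [MeasurableSpace α] {μ : Measure α}
    {f ψ : α → ℝ} {c : ℝ} (hψ0 : ∀ y, 0 ≤ ψ y) (hψ : ∫ y, ψ y ∂μ = 1) (hf0 : ∀ y, 0 ≤ f y)
    (hf : ∀ y ∈ Function.support ψ, f y ≤ c) : ∫ y, f y * ψ y ∂μ ≤ c := by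
  have hψ_int : Integrable ψ μ := by
    by_contra h
    rw [integral_undef h] at hψ
    exact zero_ne_one hψ
  have h_le : ∀ y, f y * ψ y ≤ c * ψ y := by
    intro y
    by_cases hy : ψ y = 0
    · simp [hy]
    · exact mul_le_mul_of_nonneg_right (hf y hy) (hψ0 y)
  calc ∫ y, f y * ψ y ∂μ ≤ ∫ y, c * ψ y ∂μ :=
        integral_mono_of_nonneg (.of_forall fun y => mul_nonneg (hf0 y) (hψ0 y))
          (hψ_int.const_mul c) (.of_forall h_le)
    _ = c := by rw [integral_const_mul, hψ, mul_one]

theorem statement18_general (d n : ℕ) (hn : 0 < n) (t : ℝ) (ht : 0 < t) :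
    ∃ A₀ : ℝ, 10 < A₀ ∧
      ∀ W : Submodule ℝ (EuclideanSpace ℝ (Fin d)), Module.finrank ℝ W = d - n →
      ∀ A : ℝ, A₀ ≤ A → ∀ ε : ℝ, 0 < ε →
      ∀ ψ : EuclideanSpace ℝ (Fin d) → ℝ, (∀ x, 0 ≤ ψ x) →
        Function.support ψ ⊆ Metric.ball 0 (2 * ε) → (∫ x, ψ x = 1) →
      ∀ x : EuclideanSpace ℝ (Fin d),
        (∫ y, Set.indicator
            (coneK (W : Set (EuclideanSpace ℝ (Fin d))) t ∩ {y | A * ε < ‖y‖})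
            (fun y => (‖y‖ ^ n)⁻¹) (x - y) * ψ y)
          ≤ 2 * Set.indicator (coneK (W : Set (EuclideanSpace ℝ (Fin d))) (2 * t))
              (fun x => (‖x‖ ^ n)⁻¹) x := by
  have h2t : 0 < 2 / t := by positivity
  refine ⟨4 * n + 11 + 2 / t, by linarith [(n.cast_nonneg : (0 : ℝ) ≤ n)], ?_⟩
  intro W _ A hA ε hε ψ hψ0 hψ_supp hψ x
  refine integral_mul_le_of_le_on_support hψ0 hψ
    (fun y => indicator_nonneg (fun z _ => by positivity) _) fun y hy => ?_
  have hy' : ‖y‖ < 2 * ε := mem_ball_zero_iff.mp (hψ_supp hy)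
  exact indicator_coneK_sub_le hn ht hε (by linarith) (by linarith) hy'

/-- Let `0 < n < d` and `t > 0`. There is `A₀ > 10`, depending only on
`d, n, t`, such that for all `W ∈ G(d, d-n)`, `A ≥ A₀`, `ε > 0`, any nonnegative `ψ_ε`
supported in `B(0,2ε)` with `∫ψ_ε = 1`, and `f_F(y) = χ_{K(W,t)}(y) χ_{|y|>Aε}(y) |y|⁻ⁿ`,
one has `(f_F * ψ_ε)(x) ≤ 2 χ_{K(W,2t)}(x) |x|⁻ⁿ` for every `x`. -/
theorem statement18 (d n : ℕ) (hn : 0 < n) (hnd : n < d) (t : ℝ) (ht : 0 < t) :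
    ∃ A₀ : ℝ, 10 < A₀ ∧
      ∀ W : Submodule ℝ (EuclideanSpace ℝ (Fin d)), Module.finrank ℝ W = d - n →
      ∀ A : ℝ, A₀ ≤ A → ∀ ε : ℝ, 0 < ε →
      ∀ ψ : EuclideanSpace ℝ (Fin d) → ℝ, (∀ x, 0 ≤ ψ x) →
        Function.support ψ ⊆ Metric.ball 0 (2 * ε) → (∫ x, ψ x = 1) →
      ∀ x : EuclideanSpace ℝ (Fin d),
        (∫ y, Set.indicator
            (coneK (W : Set (EuclideanSpace ℝ (Fin d))) t ∩ {y | A * ε < ‖y‖})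
            (fun y => (‖y‖ ^ n)⁻¹) (x - y) * ψ y)
          ≤ 2 * Set.indicator (coneK (W : Set (EuclideanSpace ℝ (Fin d))) (2 * t))
              (fun x => (‖x‖ ^ n)⁻¹) x :=
  statement18_general d n hn t ht
end

section
/- Let I ⊂ [0,π) be a nonempty open interval and let θ₀ ∈ [0,π) not belong to the closure of I (mod π). Let μ = ℋ¹ restricted to the segment {r e^{iθ₀} : r ∈ [0,1]} ⊂ ℂ. Then ∬_{x−y ∈ K_I∖{0}} |x−y|^{−1} dμ(x) dμ(y) = 0, while 0 < ∫_{I⊥} ‖P_θμ‖₂² dθ < ∞. In particular, the converse of the inequality ∬_{x−y∈K_I∖{0}} |x−y|^{−1} dμ dμ ≤ ∫_{I⊥} ‖P_θμ‖₂² dθ fails for arbitrary measures, even allowing an enlargement of the cone within any aperture not containing θ₀ in its closure. -/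
open MeasureTheory Measure Set Filter Metric
open scoped ENNReal Real Topology Classical

/-!
Every difference of two points of the segment is a real multiple of `e^{iθ₀}`, and such a
nonzero multiple lies in `K_I` only if `θ₀ ≡ θ (mod π)` for some `θ ∈ I`; hence the conical
energy vanishes. The projection of the segment measure onto `L_θ` is the image of Lebesgue
measure on `[0, 1]` under `r ↦ cos (θ₀ - θ) r`, so `‖P_θ μ‖₂² = |cos (θ₀ - θ)|⁻¹`. For
`θ = θ' + π/2` with `θ' ∈ I` this is `|sin (θ₀ - θ')|⁻¹`, which is at least `1` and, as
`sin (θ₀ - ·)` has no zero on the compact set `closure I`, bounded.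
-/

open Complex
open scoped Pointwise

theorem isometry_ofReal_mul_exp (θ : ℝ) : Isometry fun r : ℝ => (r : ℂ) * exp (θ * I) :=
  Isometry.of_dist_eq fun a b => by
    rw [dist_eq, ← sub_mul, ← ofReal_sub, norm_mul, norm_exp_ofReal_mul_I, mul_one, norm_real,
      Real.dist_eq, Real.norm_eq_abs]

theorem Isometry.hausdorffMeasure_one_restrict_image {X : Type*} [EMetricSpace X]
    [MeasurableSpace X] [BorelSpace X] {f : ℝ → X} (hf : Isometry f) (s : Set ℝ) :
    (μH[1] : Measure X).restrict (f '' s) = (volume.restrict s).map f := by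
  ext t ht
  rw [Measure.map_apply hf.continuous.measurable ht, Measure.restrict_apply ht,
    Measure.restrict_apply (hf.continuous.measurable ht), inter_comm t, ← image_inter_preimage,
    hf.hausdorffMeasure_image (Or.inl zero_le_one), hausdorffMeasure_real, inter_comm]

theorem Real.map_volume_restrict_mul_left {c : ℝ} (hc : c ≠ 0) (s : Set ℝ) :
    (volume.restrict s).map (c * ·) = ENNReal.ofReal |c⁻¹| • volume.restrict (c • s) := by
  have hemb : MeasurableEmbedding (c * ·) := (Homeomorph.mulLeft₀ c hc).measurableEmbedding
  rw [← Measure.restrict_smul, ← Real.map_volume_mul_left hc, hemb.restrict_map, ← image_smul]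
  simp only [smul_eq_mul, preimage_image_eq _ hemb.injective]

theorem Real.volume_smul (c : ℝ) (s : Set ℝ) :
    volume (c • s) = ENNReal.ofReal |c| * volume s := by
  simp [Measure.addHaar_smul volume c s]

theorem lintegral_rnDeriv_smul_restrict_sq {α : Type*} [MeasurableSpace α] (μ : Measure α)
    [SigmaFinite μ] {a : ℝ≥0∞} (ha : a ≠ ⊤) {T : Set α} (hT : MeasurableSet T) :
    ∫⁻ x, ((a • μ.restrict T).rnDeriv μ x) ^ 2 ∂μ = a ^ 2 * μ T := by
  have hrn : ∀ᵐ x ∂μ,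
      ((a • μ.restrict T).rnDeriv μ x) ^ 2 = T.indicator (fun _ => a ^ 2) x := by
    filter_upwards [Measure.rnDeriv_smul_left_of_ne_top' (μ.restrict T) μ ha,
      Measure.rnDeriv_restrict_self μ hT] with x h₁ h₂
    by_cases hx : x ∈ T <;> simp [h₁, h₂, hx]
  rw [lintegral_congr_ae hrn, lintegral_indicator_const hT]

theorem projCoord_ofReal_mul_exp (θ₀ θ r : ℝ) :
    projCoord θ (r * exp (θ₀ * I)) = Real.cos (θ₀ - θ) * r := by
  rw [projCoord, mul_assoc, ← exp_add, ← add_mul, ← ofReal_neg, ← ofReal_add,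
    re_ofReal_mul, exp_ofReal_mul_I_re, ← sub_eq_add_neg, mul_comm]

theorem continuous_projCoord_s19 (θ : ℝ) : Continuous (projCoord θ) := by
  unfold projCoord
  fun_prop

theorem projL2sq_segment {θ₀ θ : ℝ} (hc : Real.cos (θ₀ - θ) ≠ 0) :
    projL2sq θ
        ((μH[1] : Measure ℂ).restrict ((fun r : ℝ => (r : ℂ) * exp (θ₀ * I)) '' Icc 0 1))
      = ENNReal.ofReal |Real.cos (θ₀ - θ)|⁻¹ := by
  set c := Real.cos (θ₀ - θ)
  have hf := isometry_ofReal_mul_exp θ₀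
  have hmap :
      ((μH[1] : Measure ℂ).restrict ((fun r : ℝ => (r : ℂ) * exp (θ₀ * I)) '' Icc 0 1)).map
        (projCoord θ) = ENNReal.ofReal |c⁻¹| • volume.restrict (c • Icc 0 1) := by
    rw [hf.hausdorffMeasure_one_restrict_image,
      Measure.map_map (continuous_projCoord_s19 θ).measurable hf.continuous.measurable,
      ← Real.map_volume_restrict_mul_left hc]
    exact congrArg (Measure.map · _) (funext (projCoord_ofReal_mul_exp θ₀ θ))
  rw [projL2sq, hmap,
    dif_pos ((Measure.absolutelyContinuous_of_le Measure.restrict_le_self).smul_left _),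
    lintegral_rnDeriv_smul_restrict_sq volume ENNReal.ofReal_ne_top
      (isCompact_Icc.smul c).isClosed.measurableSet,
    Real.volume_smul, Real.volume_Icc, sub_zero, ← ENNReal.ofReal_pow (abs_nonneg _),
    ← ENNReal.ofReal_mul (abs_nonneg _), ← ENNReal.ofReal_mul (by positivity)]
  congr 1
  rw [abs_inv]
  field_simp

theorem sin_sub_eq_zero_of_ofReal_mul_exp_eq {θ₀ θ t u : ℝ} (ht : t ≠ 0)
    (h : (t : ℂ) * exp (θ₀ * I) = u * exp (θ * I)) : Real.sin (θ₀ - θ) = 0 := by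
  have hre := congrArg re h
  have him := congrArg im h
  simp only [re_ofReal_mul, im_ofReal_mul, exp_ofReal_mul_I_re, exp_ofReal_mul_I_im] at hre him
  have : t * Real.sin (θ₀ - θ) = 0 := by
    rw [Real.sin_sub]
    linear_combination Real.cos θ * him - Real.sin θ * hre
  exact (mul_eq_zero.1 this).resolve_left ht

theorem sin_sub_ne_zero_of_forall_add_int_mul_pi_notMem {θ₀ θ : ℝ} {S : Set ℝ}
    (h : ∀ k : ℤ, θ₀ + k * π ∉ S) (hθ : θ ∈ S) : Real.sin (θ₀ - θ) ≠ 0 := by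
  rw [Ne, Real.sin_eq_zero_iff]
  rintro ⟨n, hn⟩
  exact h (-n) (by convert hθ using 1; push_cast; linarith)

theorem lintegral_lintegral_indicator_coneOf_eq_zero {μ : Measure ℂ} {J : Set ℝ} {θ₀ : ℝ}
    (hμ : ∀ᵐ x ∂μ, x ∈ range fun r : ℝ => (r : ℂ) * exp (θ₀ * I))
    (hJ : ∀ θ ∈ J, Real.sin (θ₀ - θ) ≠ 0) (g : ℂ → ℂ → ℝ≥0∞) :
    ∫⁻ x, ∫⁻ y, {y | x - y ∈ coneOf J \ {0}}.indicator (g x) y ∂μ ∂μ = 0 := by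
  have hdiff : ∀ x ∈ range fun r : ℝ => (r : ℂ) * exp (θ₀ * I),
      ∀ y ∈ range fun r : ℝ => (r : ℂ) * exp (θ₀ * I), x - y ∉ coneOf J \ {0} := by
    rintro _ ⟨r, rfl⟩ _ ⟨s, rfl⟩ ⟨⟨t, θ, hθ, h⟩, hne⟩
    rw [← sub_mul, ← ofReal_sub] at h hne
    exact hJ θ hθ (sin_sub_eq_zero_of_ofReal_mul_exp_eq (fun h0 => hne (by simp [h0])) h)
  calc ∫⁻ x, ∫⁻ y, {y | x - y ∈ coneOf J \ {0}}.indicator (g x) y ∂μ ∂μ = ∫⁻ _, 0 ∂μ :=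
        lintegral_congr_ae <| hμ.mono fun x hx => (lintegral_congr_ae <| hμ.mono fun y hy =>
          indicator_of_notMem (s := {y | x - y ∈ coneOf J \ {0}}) (hdiff x hx y hy) (g x)).trans
            lintegral_zero
    _ = 0 := lintegral_zero

theorem setLIntegral_projL2sq_segment_perp {J : Set ℝ} {θ₀ : ℝ} (hJ : MeasurableSet J)
    (hsin : ∀ θ ∈ J, Real.sin (θ₀ - θ) ≠ 0) :
    ∫⁻ θ in (fun θ => θ + π / 2) '' J,
        projL2sq θ
          ((μH[1] : Measure ℂ).restrict ((fun r : ℝ => (r : ℂ) * exp (θ₀ * I)) '' Icc 0 1))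
      = ∫⁻ θ in J, ENNReal.ofReal |Real.sin (θ₀ - θ)|⁻¹ := by
  rw [← (measurePreserving_add_right volume (π / 2)).setLIntegral_comp_emb
    (measurableEmbedding_addRight (π / 2))]
  refine setLIntegral_congr_fun hJ fun θ hθ => ?_
  have hcos : Real.cos (θ₀ - (θ + π / 2)) = Real.sin (θ₀ - θ) := by
    rw [← Real.cos_sub_pi_div_two]
    ring_nf
  rw [projL2sq_segment (hcos ▸ hsin θ hθ), hcos]

theorem one_le_ofReal_inv_abs_sin {x : ℝ} (hx : Real.sin x ≠ 0) :
    1 ≤ ENNReal.ofReal |Real.sin x|⁻¹ :=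
  ENNReal.one_le_ofReal.2 ((one_le_inv₀ (abs_pos.2 hx)).2 (Real.abs_sin_le_one x))

theorem setLIntegral_ofReal_inv_abs_sin_lt_top {J : Set ℝ} {θ₀ : ℝ}
    (hJ : IsCompact (closure J)) (hsin : ∀ θ ∈ closure J, Real.sin (θ₀ - θ) ≠ 0) :
    ∫⁻ θ in J, ENNReal.ofReal |Real.sin (θ₀ - θ)|⁻¹ < ⊤ := by
  have hcont : ContinuousOn (fun θ => |Real.sin (θ₀ - θ)|⁻¹) (closure J) :=
    (by fun_prop : Continuous fun θ => |Real.sin (θ₀ - θ)|).continuousOn.inv₀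
      fun θ hθ => abs_ne_zero.2 (hsin θ hθ)
  exact ((hcont.integrableOn_compact hJ).mono_set subset_closure).setLIntegral_lt_top

theorem statement19_general (I : Set ℝ) (hne : I.Nonempty) (hIopen : IsOpen I)
    (hIsub : I ⊆ Set.Ico 0 π)
    (θ₀ : ℝ)
    (hcl : ∀ k : ℤ, θ₀ + k * π ∉ closure I) :
    (∫⁻ x, ∫⁻ y, Set.indicator {y | x - y ∈ coneOf I \ {0}}
        (fun y => ENNReal.ofReal ‖x - y‖⁻¹) y
        ∂((μH[1] : Measure ℂ).restrict
            ((fun r : ℝ => (r : ℂ) * Complex.exp ((θ₀ : ℂ) * Complex.I)) '' Set.Icc 0 1))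
        ∂((μH[1] : Measure ℂ).restrict
            ((fun r : ℝ => (r : ℂ) * Complex.exp ((θ₀ : ℂ) * Complex.I)) '' Set.Icc 0 1))) = 0 ∧
    0 < (∫⁻ θ in (fun θ => θ + π / 2) '' I, projL2sq θ
          ((μH[1] : Measure ℂ).restrict
            ((fun r : ℝ => (r : ℂ) * Complex.exp ((θ₀ : ℂ) * Complex.I)) '' Set.Icc 0 1))) ∧
    (∫⁻ θ in (fun θ => θ + π / 2) '' I, projL2sq θ
          ((μH[1] : Measure ℂ).restrict
            ((fun r : ℝ => (r : ℂ) * Complex.exp ((θ₀ : ℂ) * Complex.I)) '' Set.Icc 0 1))) < ⊤ := by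
  have hsin : ∀ θ ∈ closure I, Real.sin (θ₀ - θ) ≠ 0 := fun θ =>
    sin_sub_ne_zero_of_forall_add_int_mul_pi_notMem hcl
  have hsinI : ∀ θ ∈ I, Real.sin (θ₀ - θ) ≠ 0 := fun θ hθ => hsin θ (subset_closure hθ)
  have hseg : ∀ᵐ x ∂(μH[1] : Measure ℂ).restrict
      ((fun r : ℝ => (r : ℂ) * Complex.exp ((θ₀ : ℂ) * Complex.I)) '' Set.Icc 0 1),
      x ∈ range fun r : ℝ => (r : ℂ) * Complex.exp ((θ₀ : ℂ) * Complex.I) :=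
    ae_restrict_of_forall_mem
      (isCompact_Icc.image (isometry_ofReal_mul_exp θ₀).continuous).measurableSet
      fun _ hx => image_subset_range _ _ hx
  have hIcpt : IsCompact (closure I) :=
    ((isBounded_Icc 0 π).subset (hIsub.trans Ico_subset_Icc_self)).isCompact_closure
  rw [setLIntegral_projL2sq_segment_perp hIopen.measurableSet hsinI]
  refine ⟨lintegral_lintegral_indicator_coneOf_eq_zero hseg hsinI _, ?_,
    setLIntegral_ofReal_inv_abs_sin_lt_top hIcpt hsin⟩
  calc 0 < volume I := hIopen.measure_pos volume hne
    _ = ∫⁻ _ in I, 1 := (setLIntegral_one I).symm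
    _ ≤ _ := setLIntegral_mono' hIopen.measurableSet fun θ hθ =>
      one_le_ofReal_inv_abs_sin (hsinI θ hθ)

/-- Let `I ⊆ [0,π)` be a nonempty open interval and `θ₀ ∈ [0,π)` with
`θ₀ ∉ closure I (mod π)`. For `μ = ℋ¹` restricted to the unit segment in direction `e^{iθ₀}`,
the conical energy `∬_{x-y ∈ K_I \ {0}} |x-y|⁻¹ dμ dμ` vanishes, while
`0 < ∫_{I⊥} ‖P_θ μ‖₂² dθ < ∞`; so the converse of the energy–projection inequality fails. -/
theorem statement19 (I : Set ℝ) (hne : I.Nonempty) (hIopen : IsOpen I)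
    (hIconn : I.OrdConnected) (hIsub : I ⊆ Set.Ico 0 π)
    (θ₀ : ℝ) (hθ₀ : θ₀ ∈ Set.Ico 0 π)
    (hcl : ∀ k : ℤ, θ₀ + k * π ∉ closure I) :
    (∫⁻ x, ∫⁻ y, Set.indicator {y | x - y ∈ coneOf I \ {0}}
        (fun y => ENNReal.ofReal ‖x - y‖⁻¹) y
        ∂((μH[1] : Measure ℂ).restrict
            ((fun r : ℝ => (r : ℂ) * Complex.exp ((θ₀ : ℂ) * Complex.I)) '' Set.Icc 0 1))
        ∂((μH[1] : Measure ℂ).restrict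
            ((fun r : ℝ => (r : ℂ) * Complex.exp ((θ₀ : ℂ) * Complex.I)) '' Set.Icc 0 1))) = 0 ∧
    0 < (∫⁻ θ in (fun θ => θ + π / 2) '' I, projL2sq θ
          ((μH[1] : Measure ℂ).restrict
            ((fun r : ℝ => (r : ℂ) * Complex.exp ((θ₀ : ℂ) * Complex.I)) '' Set.Icc 0 1))) ∧
    (∫⁻ θ in (fun θ => θ + π / 2) '' I, projL2sq θ
          ((μH[1] : Measure ℂ).restrict
            ((fun r : ℝ => (r : ℂ) * Complex.exp ((θ₀ : ℂ) * Complex.I)) '' Set.Icc 0 1))) < ⊤ :=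
  statement19_general I hne hIopen hIsub θ₀ hcl
end
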